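/- arXiv:1111.0663 — 8 statements merged into one kernel-verified Lean document; each statement's English description precedes it below -/
import Mathlib

section
/- Let m ≥ n ≥ 1 and let M be an n×m matrix over a field of rank n. For S ⊆ {0,...,m-1}, let M_S denote the n×|S| matrix formed by taking the columns of M (in order) with indices in S, and let w(S) = Σ_{s∈S} s. Then there is a unique set S of size n maximizing w(S) subject to det(M_S) ≠ 0. -/
open Submodule Module Matrix

private lemma det_iff_li {F : Type*} [Field F] {n m : ℕ} (M : Matrix (Fin n) (Fin m) F)
    (S : Finset (Fin m)) (h : S.card = n) :
    (M.submatrix id ⇑(S.orderEmbOfFin h)).det ≠ 0 ↔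
      LinearIndependent F (fun j : S => Mᵀ j) := by
  rw [← isUnit_iff_ne_zero, ← Matrix.isUnit_iff_isUnit_det,
    ← Matrix.linearIndependent_cols_iff_isUnit]
  have hfam : (fun k : Fin n => (M.submatrix id ⇑(S.orderEmbOfFin h))ᵀ k)
      = (fun j : S => Mᵀ j) ∘ ⇑(S.orderIsoOfFin h) := by
    funext k
    ext i
    simp [Matrix.submatrix, Finset.coe_orderIsoOfFin_apply]
  rw [show (M.submatrix id ⇑(S.orderEmbOfFin h)).col = _ from hfam]
  exact linearIndependent_equiv (R := F) ((S.orderIsoOfFin h).toEquiv)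
    (f := fun j : S => Mᵀ j)

private lemma exists_li {F : Type*} [Field F] {n m : ℕ} (M : Matrix (Fin n) (Fin m) F)
    (hrank : M.rank = n) :
    ∃ S : Finset (Fin m), S.card = n ∧ LinearIndependent F (fun j : S => Mᵀ j) := by
  classical
  set v : Fin m → (Fin n → F) := fun j => Mᵀ j with hv
  obtain ⟨b, hbsub, hbspan, hbind⟩ := exists_linearIndependent F (Set.range v)
  have hbfin : b.Finite := (Set.finite_range v).subset hbsub
  haveI := hbfin.fintype
  have hspan_top : span F (Set.range v) = ⊤ := by
    apply Submodule.eq_top_of_finrank_eq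
    have := M.rank_eq_finrank_span_cols
    rw [hrank] at this
    rw [show Set.range v = Set.range M.col from rfl, ← this, Module.finrank_fin_fun]
  have hcard : b.toFinset.card = n := by
    have h2 := finrank_span_set_eq_card hbind
    rw [hbspan, hspan_top] at h2
    rw [← h2, finrank_top, Module.finrank_fin_fun]
  have hex : ∀ w : b, ∃ j, v j = (w : Fin n → F) := fun w => hbsub w.2
  choose j hj using hex
  have hjinj : Function.Injective j := fun w w' h => by
    apply Subtype.ext
    rw [← hj w, ← hj w', h]
  refine ⟨Finset.univ.image j, ?_, ?_⟩
  · rw [Finset.card_image_of_injective _ hjinj, Finset.card_univ, ← Set.toFinset_card, hcard]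
  · have hinj : Set.InjOn v ↑(Finset.univ.image j) := by
      intro a ha a' ha' hvv
      rw [Finset.coe_image, Finset.coe_univ, Set.image_univ] at ha ha'
      obtain ⟨w, rfl⟩ := ha
      obtain ⟨w', rfl⟩ := ha'
      have : w = w' := Subtype.ext (by rw [← hj w, ← hj w', hvv])
      rw [this]
    have himg : v '' ↑(Finset.univ.image j) = b := by
      rw [Finset.coe_image, Finset.coe_univ, Set.image_univ, ← Set.range_comp]
      have : v ∘ j = fun w : b => (w : Fin n → F) := funext hj
      rw [this, Subtype.range_coe]
    have := (linearIndepOn_iff_image hinj).2 (by rw [himg]; exact hbind)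
    exact this

private lemma exchange_li {F : Type*} [Field F] {n m : ℕ} (M : Matrix (Fin n) (Fin m) F)
    (S T : Finset (Fin m)) (hS : S.card = n) (hT : T.card = n)
    (hSi : LinearIndependent F (fun j : S => Mᵀ j))
    (hTi : LinearIndependent F (fun j : T => Mᵀ j))
    (x : Fin m) (hxS : x ∈ S) (hxT : x ∉ T) :
    ∃ y ∈ T, y ∉ S ∧ ∃ h : (insert x (T.erase y)).card = n,
      LinearIndependent F (fun j : (insert x (T.erase y) : Finset (Fin m)) => Mᵀ j) := by
  classical
  set v : Fin m → (Fin n → F) := fun j => Mᵀ j with hv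
  have hTne : T.Nonempty := Finset.card_pos.1 (by rw [hT, ← hS]; exact Finset.card_pos.2 ⟨x, hxS⟩)
  haveI : Nonempty T := ⟨⟨hTne.choose, hTne.choose_spec⟩⟩
  have hcardT : Fintype.card T = Module.finrank F (Fin n → F) := by
    rw [Fintype.card_coe, hT, Module.finrank_fin_fun]
  let b : Basis T F (Fin n → F) := basisOfLinearIndependentOfCardEqFinrank hTi hcardT
  have hb : ⇑b = fun j : T => v j := coe_basisOfLinearIndependentOfCardEqFinrank _ _
  have hyex : ∃ y : T, b.repr (v x) y ≠ 0 ∧ (y : Fin m) ∉ S := by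
    by_contra hcon
    push_neg at hcon
    have hmem : v x ∈ span F ((fun j : S => v j) '' {z : S | (z : Fin m) ≠ x}) := by
      have hrepr := b.sum_repr (v x)
      rw [← hrepr]
      apply Submodule.sum_mem
      intro y _
      by_cases hy : b.repr (v x) y = 0
      · rw [hy, zero_smul]; exact Submodule.zero_mem _
      · apply Submodule.smul_mem
        apply Submodule.subset_span
        have hyS : (y : Fin m) ∈ S := hcon y hy
        refine ⟨⟨y, hyS⟩, ?_, ?_⟩
        · intro hxy
          exact hxT (hxy ▸ y.2)
        · rw [hb]
    have hx' : (⟨x, hxS⟩ : S) ∉ {z : S | (z : Fin m) ≠ x} := by simp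
    exact hSi.notMem_span_image hx' hmem
  obtain ⟨y, hcy, hyS⟩ := hyex
  have hxe : x ∉ T.erase y := fun h => hxT (Finset.mem_of_mem_erase h)
  have hcard : (insert x (T.erase y)).card = n := by
    have hpos : 0 < n := hT ▸ Finset.card_pos.2 hTne
    rw [Finset.card_insert_of_notMem hxe, Finset.card_erase_of_mem y.2, hT]
    omega
  refine ⟨y, y.2, hyS, hcard, ?_⟩
  have h1 : LinearIndependent F (fun z : (T.erase y : Finset (Fin m)) => v z) := by
    have hmap : ∀ z : (T.erase y : Finset (Fin m)), (z : Fin m) ∈ T :=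
      fun z => Finset.mem_of_mem_erase z.2
    exact hTi.comp (fun z : (T.erase ↑y : Finset (Fin m)) => (⟨(z : Fin m), hmap z⟩ : T))
      (fun a a' h => Subtype.ext (Subtype.mk_eq_mk.1 h))
  have h2 : v x ∉ span F (v '' ↑(T.erase y)) := by
    intro hmem
    have himg : v '' ↑(T.erase y) = ⇑b '' {z : T | z ≠ y} := by
      ext w
      constructor
      · rintro ⟨a, ha, rfl⟩
        have ha' : a ∈ T.erase y := ha
        refine ⟨⟨a, Finset.mem_of_mem_erase ha'⟩, ?_, by rw [hb]⟩
        intro h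
        exact (Finset.ne_of_mem_erase ha') (congrArg Subtype.val h)
      · rintro ⟨z, hz, rfl⟩
        refine ⟨z, ?_, by rw [hb]⟩
        exact Finset.mem_coe.2 (Finset.mem_erase.2
          ⟨fun h => hz (Subtype.ext h), z.2⟩)
    rw [himg, Basis.mem_span_image] at hmem
    exact (hmem (Finsupp.mem_support_iff.2 hcy)) rfl
  have hxe' : x ∉ (↑(T.erase (y : Fin m)) : Set (Fin m)) := fun h => hxe (Finset.mem_coe.1 h)
  have h4 := (linearIndepOn_insert (f := v) hxe').2 ⟨h1, h2⟩
  have hcoe : (↑(insert x (T.erase y)) : Set (Fin m)) = insert x ↑(T.erase y) := by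
    simp
  rw [← hcoe] at h4
  exact h4

/-- For a full row-rank matrix, there is a unique set of column indices of size `n`
maximizing the sum of indices subject to the corresponding minor being nonsingular. -/
theorem unique_max_weight_basis {F : Type*} [Field F] (n m : ℕ) (hn : 1 ≤ n) (hnm : n ≤ m)
    (M : Matrix (Fin n) (Fin m) F) (hrank : M.rank = n) :
    ∃! S : {S : Finset (Fin m) // S.card = n},
      (M.submatrix id ⇑(S.1.orderEmbOfFin S.2)).det ≠ 0 ∧
      ∀ T : {S : Finset (Fin m) // S.card = n},
        (M.submatrix id ⇑(T.1.orderEmbOfFin T.2)).det ≠ 0 →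
          ∑ s ∈ T.1, (s : ℕ) ≤ ∑ s ∈ S.1, (s : ℕ) := by
  classical
  obtain ⟨S₀, hS₀c, hS₀i⟩ := exists_li M hrank
  obtain ⟨S, hSmem, hSmax⟩ := Finset.exists_max_image
    (Finset.univ.filter fun S : Finset (Fin m) =>
      S.card = n ∧ LinearIndependent F (fun j : S => Mᵀ j))
    (fun S => ∑ s ∈ S, (s : ℕ))
    ⟨S₀, Finset.mem_filter.2 ⟨Finset.mem_univ _, hS₀c, hS₀i⟩⟩
  rw [Finset.mem_filter] at hSmem
  obtain ⟨-, hSc, hSi⟩ := hSmem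
  have hmax : ∀ T : Finset (Fin m), T.card = n →
      LinearIndependent F (fun j : T => Mᵀ j) →
      ∑ s ∈ T, (s : ℕ) ≤ ∑ s ∈ S, (s : ℕ) :=
    fun T hc hi => hSmax T (Finset.mem_filter.2 ⟨Finset.mem_univ _, hc, hi⟩)
  refine ⟨⟨S, hSc⟩, ⟨(det_iff_li M S hSc).2 hSi, ?_⟩, ?_⟩
  · intro T hTdet
    exact hmax T.1 T.2 ((det_iff_li M T.1 T.2).1 hTdet)
  · rintro ⟨T, hTc⟩ ⟨hTdet, hTmax⟩
    have hTi := (det_iff_li M T hTc).1 hTdet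
    have hTmax' : ∀ U : Finset (Fin m), (h : U.card = n) →
        LinearIndependent F (fun j : U => Mᵀ j) →
        ∑ s ∈ U, (s : ℕ) ≤ ∑ s ∈ T, (s : ℕ) :=
      fun U h hi => hTmax ⟨U, h⟩ ((det_iff_li M U h).2 hi)
    apply Subtype.ext
    by_contra hne
    have hdiff : ((S \ T) ∪ (T \ S)).Nonempty := by
      rw [Finset.nonempty_iff_ne_empty]
      intro h
      rw [Finset.union_eq_empty, Finset.sdiff_eq_empty_iff_subset,
        Finset.sdiff_eq_empty_iff_subset] at h
      exact hne (Finset.Subset.antisymm h.2 h.1)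
    obtain ⟨x, hxmem, hxmax⟩ : ∃ x ∈ (S \ T) ∪ (T \ S), ∀ z ∈ (S \ T) ∪ (T \ S), z ≤ x :=
      ⟨_, Finset.max'_mem _ hdiff, fun z hz => Finset.le_max' _ z hz⟩
    rcases Finset.mem_union.1 hxmem with hxst | hxts
    · obtain ⟨hxS, hxT⟩ := Finset.mem_sdiff.1 hxst
      obtain ⟨y, hyT, hyS, hc, hli⟩ := exchange_li M S T hSc hTc hSi hTi x hxS hxT
      have hle := hTmax' (insert x (T.erase y)) hc hli
      have hylt : (y : ℕ) < (x : ℕ) := by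
        have hle' : y ≤ x := hxmax y (Finset.mem_union_right _ (Finset.mem_sdiff.2 ⟨hyT, hyS⟩))
        have hne' : y ≠ x := fun h => hxT (h ▸ hyT)
        exact lt_of_le_of_ne (Fin.le_iff_val_le_val.1 hle') (fun h => hne' (Fin.ext h))
      have hxe : x ∉ T.erase y := fun h => hxT (Finset.mem_of_mem_erase h)
      have hsum : ∑ s ∈ insert x (T.erase y), (s : ℕ) + (y : ℕ)
          = (x : ℕ) + ∑ s ∈ T, (s : ℕ) := by
        rw [Finset.sum_insert hxe, add_assoc, Finset.sum_erase_add _ _ hyT]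
      omega
    · obtain ⟨hxT, hxS⟩ := Finset.mem_sdiff.1 hxts
      obtain ⟨y, hyS, hyT, hc, hli⟩ := exchange_li M T S hTc hSc hTi hSi x hxT hxS
      have hle := hmax (insert x (S.erase y)) hc hli
      have hylt : (y : ℕ) < (x : ℕ) := by
        have hle' : y ≤ x := hxmax y (Finset.mem_union_left _ (Finset.mem_sdiff.2 ⟨hyS, hyT⟩))
        have hne' : y ≠ x := fun h => hxS (h ▸ hyS)
        exact lt_of_le_of_ne (Fin.le_iff_val_le_val.1 hle') (fun h => hne' (Fin.ext h))
      have hxe : x ∉ S.erase y := fun h => hxS (Finset.mem_of_mem_erase h)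
      have hsum : ∑ s ∈ insert x (S.erase y), (s : ℕ) + (y : ℕ)
          = (x : ℕ) + ∑ s ∈ S, (s : ℕ) := by
        rw [Finset.sum_insert hxe, add_assoc, Finset.sum_erase_add _ _ hyS]
      have hwST := hTmax' S hSc hSi
      have hwTS := hmax T hTc hTi
      omega
end

section
/- Let 1 ≤ r ≤ n, let M be an n×r matrix of rank r over a field F, let K be an extension field of F containing an element g of multiplicative order at least n. For α ∈ K define the r×n matrix A_α by (A_α)_{i,j} = (g^i·α)^j. Then there are at most nr − r(r+1)/2 values α ∈ K such that rank(A_α·M) < r. -/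
open Polynomial Matrix
set_option maxHeartbeats 1600000

/-! Auxiliary lemmas for the Gabizon–Raz rank-preserving lemma. -/

theorem GR.coeff_prod_sum {K : Type*} [CommRing K] {ι : Type*} (s : Finset ι) (f : ι → K[X])
    (δ : ι → ℕ) (h : ∀ i ∈ s, (f i).natDegree ≤ δ i) :
    (∏ i ∈ s, f i).coeff (∑ i ∈ s, δ i) = ∏ i ∈ s, (f i).coeff (δ i) := by
  classical
  induction s using Finset.cons_induction with
  | empty => simp
  | cons a s' hx ih =>
    rw [Finset.prod_cons, Finset.sum_cons, Finset.prod_cons,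
      coeff_mul_add_eq_of_natDegree_le (h a (Finset.mem_cons_self a s'))
        ((natDegree_prod_le _ _).trans
          (Finset.sum_le_sum fun i hi => h i (Finset.mem_cons_of_mem hi))),
      ih fun i hi => h i (Finset.mem_cons_of_mem hi)]

theorem GR.natDegree_det_le {K : Type*} [CommRing K] {r : ℕ} (Q : Matrix (Fin r) (Fin r) K[X])
    (δ : Fin r → ℕ) (h : ∀ i k, (Q i k).natDegree ≤ δ k) :
    Q.det.natDegree ≤ ∑ k, δ k := by
  rw [Matrix.det_apply']
  refine natDegree_sum_le_of_forall_le _ _ fun σ _ => ?_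
  refine (natDegree_mul_le).trans ?_
  simp only [natDegree_intCast, zero_add]
  exact (natDegree_prod_le _ _).trans (Finset.sum_le_sum fun i _ => h (σ i) i)

theorem GR.coeff_det_sum {K : Type*} [CommRing K] {r : ℕ} (Q : Matrix (Fin r) (Fin r) K[X])
    (δ : Fin r → ℕ) (h : ∀ i k, (Q i k).natDegree ≤ δ k) :
    Q.det.coeff (∑ k, δ k) = (Matrix.of fun i k => (Q i k).coeff (δ k)).det := by
  rw [Matrix.det_apply', Matrix.det_apply', finset_sum_coeff]
  refine Finset.sum_congr rfl fun σ _ => ?_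
  have h1 : (∏ i, Q (σ i) i).natDegree ≤ ∑ k, δ k :=
    (natDegree_prod_le _ _).trans (Finset.sum_le_sum fun i _ => h (σ i) i)
  have h2 : ((Equiv.Perm.sign σ : ℤ) : K[X]).natDegree ≤ 0 := (natDegree_intCast _).le
  rw [show (∑ k, δ k) = 0 + ∑ k, δ k from (zero_add _).symm,
    coeff_mul_add_eq_of_natDegree_le h2 h1, GR.coeff_prod_sum _ _ _ fun i _ => h (σ i) i]
  simp [Matrix.of_apply]

theorem GR.count_incr (f : ℕ → ℕ) (step : ∀ d, f (d+1) ≤ f d + 1) :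
    ∀ m, f m ≤ f 0 + ((Finset.range m).filter fun d => f d < f (d+1)).card := by
  intro m
  induction m with
  | zero => simp
  | succ m ih =>
    rw [Finset.range_add_one, Finset.filter_insert]
    have hs := step m
    by_cases h : f m < f (m+1)
    · rw [if_pos h, Finset.card_insert_of_notMem (by simp)]
      omega
    · rw [if_neg h]
      omega

theorem GR.strictMono_gap {r : ℕ} (f : Fin r → ℕ) (hf : StrictMono f) :
    ∀ a b : Fin r, (a:ℕ) ≤ (b:ℕ) → f a + ((b:ℕ) - (a:ℕ)) ≤ f b := by
  suffices H : ∀ t (a b : Fin r), (b:ℕ) = (a:ℕ) + t → f a + t ≤ f b by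
    intro a b hab
    exact H ((b:ℕ) - (a:ℕ)) a b (by omega)
  intro t
  induction t with
  | zero => intro a b hab; have : a = b := Fin.ext (by omega); subst this; omega
  | succ t ih =>
    intro a b hab
    have hb' : (a:ℕ) + t < r := by omega
    have h1 := ih a ⟨(a:ℕ) + t, hb'⟩ (by simp)
    have h2 : f ⟨(a:ℕ)+t, hb'⟩ < f b := hf (by simp [Fin.lt_def]; omega)
    omega

/-- The submodule of vectors vanishing on coordinates `≥ d`. -/
def GR.Tsub (K : Type*) [Field K] (n : ℕ) (d : ℕ) : Submodule K (Fin n → K) where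
  carrier := {v | ∀ j : Fin n, d ≤ (j : ℕ) → v j = 0}
  add_mem' := by intro a b ha hb j hj; simp [ha j hj, hb j hj]
  zero_mem' := by intro j hj; rfl
  smul_mem' := by intro c a ha j hj; simp [ha j hj]

/-- A subspace of `K^n` of dimension `r` contains vectors with `r` distinct "pivot" (top
nonvanishing) coordinates. -/
theorem GR.exists_pivots {K : Type*} [Field K] {n r : ℕ} (W : Submodule K (Fin n → K))
    (hW : Module.finrank K W = r) :
    ∃ (d : Fin r → ℕ) (w : Fin r → (Fin n → K)), StrictMono d ∧ (∀ k, d k < n) ∧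
      (∀ k, w k ∈ W) ∧ (∀ k (j : Fin n), d k < (j : ℕ) → w k j = 0) ∧
      (∀ k (hk : d k < n), w k ⟨d k, hk⟩ ≠ 0) := by
  classical
  set U : ℕ → Submodule K (Fin n → K) := fun d => W ⊓ GR.Tsub K n d with hU
  set f : ℕ → ℕ := fun d => Module.finrank K (U d) with hf
  have hUmono : ∀ {a b : ℕ}, a ≤ b → U a ≤ U b := by
    intro a b hab
    refine inf_le_inf_left _ ?_
    intro v hv j hj
    exact hv j (le_trans hab hj)
  have hstep : ∀ d, f (d+1) ≤ f d + 1 := by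
    intro d
    by_cases hd : d < n
    · set φ : (U (d+1)) →ₗ[K] K :=
        (LinearMap.proj (⟨d, hd⟩ : Fin n)).comp (U (d+1)).subtype with hφ
      have hker : Module.finrank K (LinearMap.ker φ) ≤ Module.finrank K (U d) := by
        have hinj : Function.Injective
            (fun v : LinearMap.ker φ => (⟨v.1.1, by
              refine ⟨v.1.2.1, ?_⟩
              intro j hj
              rcases Nat.lt_or_ge d (j : ℕ) with h' | h'
              · exact v.1.2.2 j (by omega)
              · have : (j : ℕ) = d := le_antisymm h' hj
                have : j = (⟨d, hd⟩ : Fin n) := Fin.ext this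
                rw [this]
                exact v.2⟩ : U d)) := by
          intro a b hab
          ext j
          exact congrArg (fun x : U d => x.1 j) hab
        exact LinearMap.finrank_le_finrank_of_injective
          (f := { toFun := _, map_add' := fun a b => rfl, map_smul' := fun c a => rfl }) hinj
      have hrn := LinearMap.finrank_range_add_finrank_ker φ
      have hrange : Module.finrank K (LinearMap.range φ) ≤ 1 := by
        have := Submodule.finrank_le (LinearMap.range φ)
        simpa using this
      show Module.finrank K (U (d+1)) ≤ Module.finrank K (U d) + 1
      omega
    · have : U (d+1) = U d := by
        apply le_antisymm _ (hUmono (by omega))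
        refine inf_le_inf_left _ ?_
        intro v hv j hj
        omega
      show Module.finrank K (U (d+1)) ≤ Module.finrank K (U d) + 1
      rw [this]
      omega
  have h0 : f 0 = 0 := by
    have : U 0 = ⊥ := by
      apply le_antisymm _ bot_le
      intro v hv
      have : v = 0 := funext fun j => hv.2 j (Nat.zero_le _)
      simp [this]
    show Module.finrank K (U 0) = 0
    rw [this]
    exact finrank_bot K _
  have hn : f n = r := by
    have : U n = W := by
      apply le_antisymm inf_le_left
      intro v hv
      exact ⟨hv, fun j hj => absurd j.isLt (by omega)⟩
    show Module.finrank K (U n) = r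
    rw [this, hW]
  have hcard : r ≤ ((Finset.range n).filter fun d => f d < f (d+1)).card := by
    have := GR.count_incr f hstep n
    omega
  obtain ⟨P', hP'sub, hP'card⟩ := Finset.exists_subset_card_eq hcard
  set e := P'.orderIsoOfFin hP'card with he
  have hmem : ∀ k : Fin r, ((e k : ℕ) ∈ Finset.range n) ∧ f (e k) < f ((e k : ℕ) + 1) := by
    intro k
    have : (e k : ℕ) ∈ P' := (e k).2
    have := hP'sub this
    simp only [Finset.mem_filter] at this
    exact this
  have hv : ∀ k : Fin r, ∃ v : Fin n → K, v ∈ W ∧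
      (∀ j : Fin n, (e k : ℕ) < (j : ℕ) → v j = 0) ∧
      (∀ hk : (e k : ℕ) < n, v ⟨(e k : ℕ), hk⟩ ≠ 0) := by
    intro k
    obtain ⟨hkn, hkf⟩ := hmem k
    rw [Finset.mem_range] at hkn
    have hlt : U (e k : ℕ) < U ((e k : ℕ) + 1) := by
      refine lt_of_le_of_ne (hUmono (by omega)) fun hcon => ?_
      have : f (e k : ℕ) = f ((e k : ℕ) + 1) := by
        simp only [hf]
        rw [hcon]
      omega
    obtain ⟨v, hv1, hv2⟩ := SetLike.exists_of_lt hlt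
    refine ⟨v, hv1.1, fun j hj => hv1.2 j (by omega), fun hk hv0 => ?_⟩
    apply hv2
    refine ⟨hv1.1, fun j hj => ?_⟩
    rcases Nat.lt_or_ge (e k : ℕ) (j : ℕ) with h' | h'
    · exact hv1.2 j (by omega)
    · have hje : j = (⟨(e k : ℕ), hk⟩ : Fin n) := Fin.ext (le_antisymm h' hj)
      rw [hje]
      exact hv0
  choose w hw1 hw2 hw3 using hv
  refine ⟨fun k => (e k : ℕ), w, ?_, ?_, hw1, hw2, hw3⟩
  · intro a b hab
    exact Subtype.coe_lt_coe.mpr (e.strictMono hab)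
  · intro k
    have := (hmem k).1
    rwa [Finset.mem_range] at this

/-- A matrix of full column rank has a left inverse. -/
theorem GR.exists_left_inverse {F : Type*} [Field F] {n r : ℕ}
    (M : Matrix (Fin n) (Fin r) F) (hM : M.rank = r) :
    ∃ B : Matrix (Fin r) (Fin n) F, B * M = 1 := by
  have hsurj : LinearMap.range (Mᵀ.mulVecLin) = ⊤ := by
    rw [Matrix.range_mulVecLin]
    show Submodule.span F (Set.range M) = ⊤
    apply Submodule.eq_top_of_finrank_eq
    have h1 : Mᵀ.rank = Module.finrank F (Submodule.span F (Set.range M)) := by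
      rw [Matrix.rank_eq_finrank_span_cols]; rfl
    rw [← h1, Matrix.rank_transpose, hM, Module.finrank_fin_fun]
  obtain ⟨gi, hgi⟩ := (Mᵀ.mulVecLin).exists_rightInverse_of_surjective hsurj
  refine ⟨(LinearMap.toMatrix' gi)ᵀ, ?_⟩
  have h2 : Mᵀ * LinearMap.toMatrix' gi = 1 := by
    have : LinearMap.toMatrix' (Mᵀ.mulVecLin ∘ₗ gi) = Mᵀ * LinearMap.toMatrix' gi := by
      rw [LinearMap.toMatrix'_comp, ← Matrix.toLin'_apply', LinearMap.toMatrix'_toLin']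
    rw [hgi, LinearMap.toMatrix'_id] at this
    exact this.symm
  calc (LinearMap.toMatrix' gi)ᵀ * M = (Mᵀ * LinearMap.toMatrix' gi)ᵀ := by
        rw [Matrix.transpose_mul, Matrix.transpose_transpose]
    _ = 1 := by rw [h2, Matrix.transpose_one]

/-- Improved Gabizon–Raz lemma: at most `nr - r(r+1)/2` values `α` fail to preserve rank. -/
theorem rank_preserving_bad_alphas {F K : Type*} [Field F] [Field K] [Algebra F K]
    (n r : ℕ) (hr : 1 ≤ r) (hrn : r ≤ n)
    (M : Matrix (Fin n) (Fin r) F) (hM : M.rank = r)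
    (g : K) (hg : Function.Injective fun i : Fin n => g ^ (i : ℕ)) :
    ∃ s : Finset K, s.card ≤ n * r - r * (r + 1) / 2 ∧
      ∀ α : K,
        (Matrix.of (fun (i : Fin r) (j : Fin n) => (g ^ (i : ℕ) * α) ^ (j : ℕ)) *
            M.map (algebraMap F K)).rank < r → α ∈ s := by
  classical
  set φ := algebraMap F K with hφ
  set M' : Matrix (Fin n) (Fin r) K := M.map φ with hM'
  -- left inverse over K
  obtain ⟨B, hB⟩ := GR.exists_left_inverse M hM
  have hBK : (B.map φ) * M' = 1 := by
    rw [hM', ← Matrix.map_mul, hB, Matrix.map_one φ (map_zero φ) (map_one φ)]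
  -- columns of M' are linearly independent over K
  have hli : LinearIndependent K M'.col := by
    rw [Fintype.linearIndependent_iff]
    intro c hc
    have h1 : M' *ᵥ c = 0 := by
      ext j
      have := congrFun hc j
      simpa [Matrix.mulVec, dotProduct, mul_comm] using this
    intro k
    have h2 : (B.map φ) *ᵥ (M' *ᵥ c) = c := by
      rw [Matrix.mulVec_mulVec, hBK, Matrix.one_mulVec]
    rw [h1, Matrix.mulVec_zero] at h2
    exact (congrFun h2 k).symm
  have hW : Module.finrank K (Submodule.span K (Set.range M'.col)) = r := by
    rw [finrank_span_eq_card hli, Fintype.card_fin]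
  obtain ⟨d, w, hdmono, hdlt, hwW, hwhigh, hwlead⟩ := GR.exists_pivots _ hW
  -- the determinant polynomial
  set Q : Matrix (Fin r) (Fin r) K[X] := Matrix.of fun i k =>
    ∑ j : Fin n, C (w k j * (g ^ (i : ℕ)) ^ (j : ℕ)) * X ^ (j : ℕ) with hQ
  have hdeg : ∀ i k, (Q i k).natDegree ≤ d k := by
    intro i k
    show (∑ j : Fin n, C (w k j * (g ^ (i : ℕ)) ^ (j : ℕ)) * X ^ (j : ℕ)).natDegree ≤ d k
    refine natDegree_sum_le_of_forall_le _ _ fun j _ => ?_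
    by_cases hj : d k < (j : ℕ)
    · rw [hwhigh k j hj]
      simp
    · exact (natDegree_C_mul_X_pow_le _ _).trans (by omega)
  have hcoeff : ∀ i k, (Q i k).coeff (d k)
      = w k ⟨d k, hdlt k⟩ * (g ^ (d k)) ^ (i : ℕ) := by
    intro i k
    show (∑ j : Fin n, C (w k j * (g ^ (i : ℕ)) ^ (j : ℕ)) * X ^ (j : ℕ)).coeff (d k) = _
    rw [finset_sum_coeff, Finset.sum_eq_single (⟨d k, hdlt k⟩ : Fin n)]
    · rw [coeff_C_mul, coeff_X_pow, if_pos rfl, mul_one, ← pow_right_comm]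
    · intro j _ hj
      have : d k ≠ (j : ℕ) := fun h => hj (Fin.ext h.symm)
      rw [coeff_C_mul, coeff_X_pow, if_neg this, mul_zero]
    · intro h
      exact absurd (Finset.mem_univ _) h
  set D := ∑ k, d k with hD
  set P := Q.det with hP
  have hPdeg : P.natDegree ≤ D := GR.natDegree_det_le Q d hdeg
  -- the leading coefficient is nonzero
  have hlc : P.coeff D ≠ 0 := by
    rw [hP, hD, GR.coeff_det_sum Q d hdeg]
    have hmat : (Matrix.of fun i k => (Q i k).coeff (d k))
        = (Matrix.vandermonde fun k : Fin r => g ^ (d k))ᵀ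
          * Matrix.diagonal (fun k => w k ⟨d k, hdlt k⟩) := by
      ext i k
      rw [Matrix.mul_diagonal]
      simp only [Matrix.of_apply, Matrix.transpose_apply, Matrix.vandermonde]
      rw [hcoeff i k]
      ring
    rw [hmat, Matrix.det_mul, Matrix.det_transpose, Matrix.det_vandermonde,
      Matrix.det_diagonal]
    apply mul_ne_zero
    · rw [Finset.prod_ne_zero_iff]
      intro a _
      rw [Finset.prod_ne_zero_iff]
      intro b hb
      rw [Finset.mem_Ioi] at hb
      refine sub_ne_zero_of_ne fun hcon => ?_
      have : (⟨d b, hdlt b⟩ : Fin n) = ⟨d a, hdlt a⟩ := hg hcon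
      have : d b = d a := congrArg Fin.val this
      exact absurd this (Nat.ne_of_gt (hdmono hb))
    · rw [Finset.prod_ne_zero_iff]
      intro k _
      exact hwlead k (hdlt k)
  have hP0 : P ≠ 0 := fun h => hlc (by simp [h])
  -- the arithmetic bound on D
  have harith : D ≤ n * r - r * (r + 1) / 2 := by
    have hlast : r - 1 < r := by omega
    have hbound : ∀ k : Fin r, d k ≤ n - r + (k : ℕ) := by
      intro k
      have h1 := GR.strictMono_gap d hdmono k ⟨r - 1, hlast⟩ (by simp; omega)
      have h2 := hdlt ⟨r - 1, hlast⟩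
      have h3 := k.isLt
      simp only at h1 h2
      omega
    have hsum : D ≤ ∑ k : Fin r, (n - r + (k : ℕ)) :=
      Finset.sum_le_sum fun k _ => hbound k
    have hsplit : ∑ k : Fin r, (n - r + (k : ℕ))
        = r * (n - r) + ∑ i ∈ Finset.range r, i := by
      rw [Finset.sum_add_distrib, Finset.sum_const, Finset.card_univ, Fintype.card_fin,
        smul_eq_mul]
      congr 1
      exact Fin.sum_univ_eq_sum_range (fun i => i) r
    obtain ⟨m, rfl⟩ : ∃ m, r = m + 1 := ⟨r - 1, by omega⟩
    obtain ⟨p, rfl⟩ : ∃ p, n = (m + 1) + p := ⟨n - (m + 1), by omega⟩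
    have hnr : (m + 1) + p - (m + 1) = p := by omega
    rw [hsplit, hnr] at hsum
    set a : ℕ := ∑ i ∈ Finset.range (m + 1), i with ha
    have hgauss : a * 2 = (m + 1) * m := by
      rw [ha, Finset.sum_range_id_mul_two (m + 1)]
      congr 1
    set b : ℕ := (m + 1) * ((m + 1) + 1) / 2 with hb
    have hb2 : b * 2 = (m + 1) * ((m + 1) + 1) := by
      rw [hb]
      exact Nat.div_mul_cancel (Nat.even_mul_succ_self (m + 1)).two_dvd
    show D ≤ ((m + 1) + p) * (m + 1) - b
    apply Nat.le_sub_of_add_le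
    have hT : (((m + 1) + p) * (m + 1)) * 2
        = ((m + 1) * p) * 2 + (m + 1) * m + (m + 1) * ((m + 1) + 1) := by ring
    linarith [hsum, hgauss, hb2, hT]
  refine ⟨P.roots.toFinset, ?_, ?_⟩
  · calc P.roots.toFinset.card ≤ Multiset.card P.roots := Multiset.toFinset_card_le _
      _ ≤ P.natDegree := P.card_roots'
      _ ≤ D := hPdeg
      _ ≤ n * r - r * (r + 1) / 2 := harith
  · intro α hrank
    by_contra hnot
    have hPα : P.eval α ≠ 0 := by
      intro h
      apply hnot
      rw [Multiset.mem_toFinset, Polynomial.mem_roots hP0]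
      exact h
    -- the evaluated matrix equals A_α * N
    set A : Matrix (Fin r) (Fin n) K :=
      Matrix.of (fun (i : Fin r) (j : Fin n) => (g ^ (i : ℕ) * α) ^ (j : ℕ)) with hA
    set N : Matrix (Fin n) (Fin r) K := Matrix.of fun j k => w k j with hN
    have hmap : Q.map (Polynomial.eval α) = A * N := by
      ext i k
      simp only [Matrix.map_apply, hQ, Matrix.of_apply, Polynomial.eval_finset_sum,
        Polynomial.eval_mul, Polynomial.eval_C, Polynomial.eval_pow, Polynomial.eval_X]
      rw [Matrix.mul_apply]
      refine Finset.sum_congr rfl fun j _ => ?_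
      simp only [hA, hN, Matrix.of_apply]
      rw [mul_pow]
      ring
    have hdet : (A * N).det ≠ 0 := by
      rw [← hmap]
      have : (Q.map (eval α)).det = eval α Q.det := by
        rw [← Polynomial.coe_evalRingHom, ← RingHom.mapMatrix_apply,
          ← RingHom.map_det]
      rw [this]
      exact hPα
    have hrkAN : (A * N).rank = r := by
      rw [Matrix.rank_of_isUnit _ ((Matrix.isUnit_iff_isUnit_det _).mpr
        (isUnit_iff_ne_zero.mpr hdet)), Fintype.card_fin]
    -- N factors through M'
    have hfac : ∀ k : Fin r, ∃ c : Fin r → K, (∑ l, c l • M'ᵀ l) = w k := by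
      intro k
      have := hwW k
      rwa [Submodule.mem_span_range_iff_exists_fun] at this
    choose cc hcc using hfac
    set Cmat : Matrix (Fin r) (Fin r) K := Matrix.of fun l k => cc k l with hCmat
    have hNM : N = M' * Cmat := by
      ext j k
      rw [Matrix.mul_apply]
      have := congrFun (hcc k) j
      simp only [Finset.sum_apply, Pi.smul_apply, Matrix.transpose_apply,
        smul_eq_mul] at this
      rw [hN]
      simp only [Matrix.of_apply, hCmat]
      rw [← this]
      exact Finset.sum_congr rfl fun l _ => mul_comm _ _
    have hle : (A * N).rank ≤ (A * M').rank := by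
      rw [hNM, ← Matrix.mul_assoc]
      exact Matrix.rank_mul_le_left _ _
    rw [hrkAN] at hle
    exact absurd (lt_of_le_of_lt hle hrank) (lt_irrefl r)
end

section
/- Let 1 ≤ r ≤ n, M an n×r matrix of rank r over F, K an extension with g ∈ K of order ≥ n, and A_α the r×n matrix with (A_α)_{i,j} = (g^i α)^j. Then det(A_α M), viewed as a polynomial in α, is a nonzero polynomial of degree at most nr − r(r+1)/2. -/
open Polynomial Matrix Finset

section Aux

variable {R : Type*} [CommRing R]

/-- Sum of an injective `ℕ`-valued function on `Fin r` is at least `0+1+⋯+(r-1)`. -/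
lemma aux_sum_injective_ge : ∀ (r : ℕ) (f : Fin r → ℕ), Function.Injective f →
    ∑ i ∈ Finset.range r, i ≤ ∑ i : Fin r, f i := by
  intro r
  induction r with
  | zero => intro f _; simp
  | succ r ih =>
    intro f hf
    obtain ⟨i0, -, hmax⟩ := Finset.exists_max_image Finset.univ f ⟨0, Finset.mem_univ 0⟩
    have hge : r ≤ f i0 := by
      by_contra hlt
      push_neg at hlt
      have himg : (Finset.univ.image f).card = r + 1 := by
        rw [Finset.card_image_of_injective _ hf, Finset.card_univ, Fintype.card_fin]
      have hsub : Finset.univ.image f ⊆ Finset.range r := by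
        intro x hx
        obtain ⟨i, -, rfl⟩ := Finset.mem_image.mp hx
        exact Finset.mem_range.mpr (lt_of_le_of_lt (hmax i (Finset.mem_univ i)) hlt)
      have hcard := Finset.card_le_card hsub
      rw [himg, Finset.card_range] at hcard
      omega
    have hcomp : Function.Injective (f ∘ i0.succAbove) :=
      hf.comp (Fin.succAbove_right_injective)
    have hih : ∑ i ∈ Finset.range r, i ≤ ∑ i : Fin r, f (i0.succAbove i) :=
      ih (f ∘ i0.succAbove) hcomp
    rw [Fin.sum_univ_succAbove f i0, Finset.sum_range_succ]
    omega

/-- Sum of `r` distinct naturals each `< n` is at most `n*r - r*(r+1)/2`. -/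
lemma aux_sum_le {n r : ℕ} (hr : 1 ≤ r) (hrn : r ≤ n) (d : Fin r → ℕ)
    (hd : Function.Injective d) (hlt : ∀ k, d k < n) :
    ∑ k : Fin r, d k ≤ n * r - r * (r + 1) / 2 := by
  have hn : 1 ≤ n := le_trans hr hrn
  have key := aux_sum_injective_ge r (fun k => n - 1 - d k) (by
    intro a b hab
    apply hd
    have ha := hlt a; have hb := hlt b
    simp only at hab
    omega)
  have hT2 : (∑ i ∈ Finset.range r, i) * 2 = r * (r - 1) := Finset.sum_range_id_mul_two r
  have hle : ∑ k : Fin r, d k ≤ r * (n - 1) := by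
    calc ∑ k : Fin r, d k ≤ ∑ _k : Fin r, (n - 1) :=
          Finset.sum_le_sum (fun k _ => by have := hlt k; omega)
      _ = r * (n - 1) := by simp [mul_comm]
  have hsplit : ∑ k : Fin r, (n - 1 - d k) = r * (n - 1) - ∑ k : Fin r, d k := by
    rw [eq_tsub_iff_add_eq_of_le hle, ← Finset.sum_add_distrib,
      Finset.sum_congr rfl (fun k (_ : k ∈ Finset.univ) =>
        (by have := hlt k; omega : (n - 1 - d k) + d k = n - 1))]
    simp [mul_comm]
  rw [hsplit] at key
  have h3 : r * (n - 1) + r = n * r := by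
    rcases n with _ | m
    · omega
    · simp only [Nat.succ_sub_one]
      ring
  have h2 : r * (r + 1) = r * (r - 1) + 2 * r := by
    rcases r with _ | m
    · simp
    · simp only [Nat.succ_sub_one]
      ring
  omega

/-- Coefficient of a product at the sum of degree bounds. -/
lemma aux_coeff_prod {ι : Type*} (s : Finset ι) (f : ι → R[X]) (d : ι → ℕ)
    (h : ∀ i ∈ s, (f i).natDegree ≤ d i) :
    (∏ i ∈ s, f i).coeff (∑ i ∈ s, d i) = ∏ i ∈ s, (f i).coeff (d i) := by
  induction s using Finset.cons_induction with
  | empty => simp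
  | cons a s ha ih =>
    rw [Finset.prod_cons, Finset.sum_cons, Finset.prod_cons,
      coeff_mul_add_eq_of_natDegree_le (h a (Finset.mem_cons_self a s))
        ((natDegree_prod_le _ _).trans (Finset.sum_le_sum fun i hi => h i (Finset.mem_cons_of_mem hi))),
      ih (fun i hi => h i (Finset.mem_cons_of_mem hi))]

/-- Degree bound and top coefficient of a determinant with columnwise degree bounds. -/
lemma aux_det_coeff {r : ℕ} (N : Matrix (Fin r) (Fin r) R[X]) (d : Fin r → ℕ)
    (h : ∀ i k, (N i k).natDegree ≤ d k) :
    N.det.natDegree ≤ ∑ k, d k ∧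
      N.det.coeff (∑ k, d k) = (Matrix.of fun i k => (N i k).coeff (d k)).det := by
  constructor
  · rw [Matrix.det_apply]
    apply natDegree_sum_le_of_forall_le
    intro σ _
    rcases Int.units_eq_one_or (Equiv.Perm.sign σ) with hs | hs <;> rw [hs]
    · rw [one_smul]
      exact (natDegree_prod_le _ _).trans (Finset.sum_le_sum fun k _ => h (σ k) k)
    · rw [Units.neg_smul, one_smul, natDegree_neg]
      exact (natDegree_prod_le _ _).trans (Finset.sum_le_sum fun k _ => h (σ k) k)
  · rw [Matrix.det_apply, Matrix.det_apply, finset_sum_coeff]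
    apply Finset.sum_congr rfl
    intro σ _
    rcases Int.units_eq_one_or (Equiv.Perm.sign σ) with hs | hs <;> rw [hs]
    · rw [one_smul, one_smul, aux_coeff_prod _ _ _ (fun k _ => h (σ k) k)]
      rfl
    · rw [Units.neg_smul, one_smul, Units.neg_smul, one_smul, coeff_neg,
        aux_coeff_prod _ _ _ (fun k _ => h (σ k) k)]
      rfl

end Aux

section Field

variable {F : Type*} [Field F]

/-- Echelonization: an independent family of polynomials can be replaced by an
independent family with distinct `natDegree`s inside its span. -/
lemma aux_echelon (r : ℕ) : ∀ (N : ℕ) (p : Fin r → F[X]), (∑ k, (p k).natDegree) ≤ N →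
    LinearIndependent F p →
    ∃ w : Fin r → F[X], (∀ k, w k ∈ Submodule.span F (Set.range p)) ∧
      LinearIndependent F w ∧ Function.Injective fun k => (w k).natDegree := by
  intro N
  induction N using Nat.strong_induction_on with
  | _ N ih =>
    intro p hsum hp
    by_cases hinj : Function.Injective fun k => (p k).natDegree
    · exact ⟨p, fun k => Submodule.subset_span ⟨k, rfl⟩, hp, hinj⟩
    obtain ⟨k, l, hdeg, hkl⟩ := Function.not_injective_iff.mp hinj
    have hpk : p k ≠ 0 := hp.ne_zero k
    have hpl : p l ≠ 0 := hp.ne_zero l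
    set c : F := (p k).leadingCoeff / (p l).leadingCoeff with hc
    have hcne : c ≠ 0 := div_ne_zero (leadingCoeff_ne_zero.mpr hpk) (leadingCoeff_ne_zero.mpr hpl)
    set q : Fin r → F[X] := Function.update p k (p k - c • p l) with hq
    -- the updated polynomial is nonzero
    have hdeglt : (p k - c • p l).natDegree < (p k).natDegree := by
      have hdegsub : (p k - c • p l).degree < (p k).degree := by
        rw [smul_eq_C_mul]
        apply degree_sub_lt
        · rw [degree_C_mul hcne, degree_eq_natDegree hpk, degree_eq_natDegree hpl, hdeg]
        · exact hpk
        · rw [leadingCoeff_mul, leadingCoeff_C, hc,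
            div_mul_cancel₀ _ (leadingCoeff_ne_zero.mpr hpl)]
      have hz : p k - c • p l ≠ 0 := by
        intro hz0
        have hz1 : p k = c • p l := by
          rw [← sub_eq_zero]; exact hz0
        have := Fintype.linearIndependent_iff.mp hp
          (fun m => (if m = k then 1 else 0) - (if m = l then c else 0)) (by
            simp only [sub_smul, ite_smul, one_smul, zero_smul, Finset.sum_sub_distrib,
              Finset.sum_ite_eq', Finset.mem_univ, if_true]
            rw [hz1, sub_self]) k
        simp [hkl] at this
      exact natDegree_lt_natDegree hz hdegsub
    have hqm : ∀ m, m ≠ k → q m = p m := fun m hm => Function.update_of_ne hm _ _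
    have hqk : q k = p k - c • p l := Function.update_self _ _ _
    -- linear independence of q
    have hq_indep : LinearIndependent F q := by
      rw [Fintype.linearIndependent_iff]
      intro a ha
      have hsum' : ∑ m, (a m - if m = l then a k * c else 0) • p m = 0 := by
        have expand : ∀ m, (a m - if m = l then a k * c else 0) • p m
            = a m • p m - (if m = l then (a k * c) • p m else 0) := by
          intro m
          rw [sub_smul]
          congr 1
          split <;> simp
        rw [Finset.sum_congr rfl (fun m _ => expand m), Finset.sum_sub_distrib,
          Finset.sum_ite_eq', if_pos (Finset.mem_univ l)]
        have expand2 : ∑ m, a m • p m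
            = ∑ m, a m • q m + (a k * c) • p l := by
          have : ∀ m, a m • p m = a m • q m + (if m = k then (a k * c) • p l else 0) := by
            intro m
            by_cases hm : m = k
            · subst hm
              rw [hqk, if_pos rfl, smul_sub, sub_add, smul_smul]
              simp
            · rw [hqm m hm, if_neg hm, add_zero]
          rw [Finset.sum_congr rfl (fun m _ => this m), Finset.sum_add_distrib,
            Finset.sum_ite_eq', if_pos (Finset.mem_univ k)]
        rw [expand2, ha, zero_add, sub_self]
      have hall := Fintype.linearIndependent_iff.mp hp _ hsum'
      intro i
      by_cases hi : i = l
      · have h2 := hall k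
        rw [if_neg hkl] at h2
        simp only [sub_zero] at h2
        have h1 := hall l
        rw [if_pos rfl, h2] at h1
        rw [hi]
        simpa using h1
      · have := hall i
        rw [if_neg hi] at this
        simpa using this
    -- sum of degrees decreased
    have hfun : ∀ m, (q m).natDegree
        = Function.update (fun m => (p m).natDegree) k ((p k - c • p l).natDegree) m := by
      intro m
      by_cases hm : m = k
      · subst hm; rw [hqk, Function.update_self]
      · rw [hqm m hm, Function.update_of_ne hm]
    have hsq : ∑ m, (q m).natDegree < ∑ m, (p m).natDegree := by
      rw [Finset.sum_congr rfl (fun m _ => hfun m),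
        Finset.sum_update_of_mem (Finset.mem_univ k),
        Finset.sum_eq_sum_sdiff_singleton_add (Finset.mem_univ k) (fun m => (p m).natDegree)]
      omega
    obtain ⟨w, hw1, hw2, hw3⟩ := ih (∑ m, (q m).natDegree)
      (lt_of_lt_of_le hsq hsum) q le_rfl hq_indep
    refine ⟨w, fun k' => ?_, hw2, hw3⟩
    have hspan : Submodule.span F (Set.range q) ≤ Submodule.span F (Set.range p) := by
      rw [Submodule.span_le]
      rintro _ ⟨m, rfl⟩
      by_cases hm : m = k
      · rw [hm, hqk]
        exact sub_mem (Submodule.subset_span ⟨k, rfl⟩)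
          (Submodule.smul_mem _ _ (Submodule.subset_span ⟨l, rfl⟩))
      · rw [hqm m hm]
        exact Submodule.subset_span ⟨m, rfl⟩
    exact hspan (hw1 k')

end Field

/-- `det(A_α M)` is a nonzero polynomial in `α` of degree at most `nr - r(r+1)/2`. -/
theorem det_rank_preserving_poly {F K : Type*} [Field F] [Field K] [Algebra F K]
    (n r : ℕ) (hr : 1 ≤ r) (hrn : r ≤ n)
    (M : Matrix (Fin n) (Fin r) F) (hM : M.rank = r)
    (g : K) (hg : Function.Injective fun i : Fin n => g ^ (i : ℕ)) :
    (Matrix.of (fun (i : Fin r) (j : Fin n) =>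
        (Polynomial.C (g ^ (i : ℕ)) * Polynomial.X) ^ (j : ℕ)) *
        M.map (fun a => Polynomial.C (algebraMap F K a))).det ≠ 0 ∧
    (Matrix.of (fun (i : Fin r) (j : Fin n) =>
        (Polynomial.C (g ^ (i : ℕ)) * Polynomial.X) ^ (j : ℕ)) *
        M.map (fun a => Polynomial.C (algebraMap F K a))).det.natDegree ≤
      n * r - r * (r + 1) / 2 := by
  classical
  have hKn : Nontrivial K := inferInstance
  set f : F →+* K[X] := Polynomial.C.comp (algebraMap F K) with hfdef
  have hfapp : ∀ a : F, f a = Polynomial.C (algebraMap F K a) := fun a => rfl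
  set A : Matrix (Fin r) (Fin n) K[X] := Matrix.of (fun (i : Fin r) (j : Fin n) =>
      (Polynomial.C (g ^ (i : ℕ)) * Polynomial.X) ^ (j : ℕ)) with hAdef
  -- the columns of `M` are linearly independent
  have hcols : LinearIndependent F Mᵀ := by
    show LinearIndependent F M.col
    rw [linearIndependent_iff_card_eq_finrank_span, Set.finrank,
      ← Matrix.rank_eq_finrank_span_cols, hM, Fintype.card_fin]
  -- the linear map sending a column to its polynomial
  set L : (Fin n → F) →ₗ[F] F[X] :=
    { toFun := fun v => ∑ j : Fin n, Polynomial.C (v j) * Polynomial.X ^ (j : ℕ)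
      map_add' := fun v w => by
        simp [Polynomial.C_add, add_mul, Finset.sum_add_distrib]
      map_smul' := fun cc v => by
        simp [Polynomial.smul_eq_C_mul, Polynomial.C_mul, Finset.mul_sum, mul_assoc] } with hLdef
  have hLcoeff : ∀ (v : Fin n → F) (t : Fin n), (L v).coeff (t : ℕ) = v t := by
    intro v t
    show (∑ j : Fin n, Polynomial.C (v j) * Polynomial.X ^ (j : ℕ)).coeff (t : ℕ) = v t
    rw [Polynomial.finset_sum_coeff]
    rw [Finset.sum_eq_single t]
    · simp
    · intro j _ hj
      rw [Polynomial.coeff_C_mul, Polynomial.coeff_X_pow,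
        if_neg (fun h => hj (Fin.ext h.symm)), mul_zero]
    · intro h
      exact absurd (Finset.mem_univ t) h
  have hLinj : LinearMap.ker L = ⊥ := by
    rw [LinearMap.ker_eq_bot']
    intro v hv
    funext t
    have := congrArg (fun q => Polynomial.coeff q (t : ℕ)) hv
    simpa [hLcoeff v t] using this
  set p : Fin r → F[X] := fun k => L (Mᵀ k) with hpdef
  have hp_indep : LinearIndependent F p := hcols.map' L hLinj
  have hdegp : ∀ k, p k ∈ Polynomial.degreeLT F n := by
    intro k
    show (∑ j : Fin n, Polynomial.C (Mᵀ k j) * Polynomial.X ^ (j : ℕ)) ∈ Polynomial.degreeLT F n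
    apply Submodule.sum_mem
    intro j _
    rw [Polynomial.mem_degreeLT]
    exact lt_of_le_of_lt (Polynomial.degree_C_mul_X_pow_le _ _)
      (by exact_mod_cast Nat.cast_lt.mpr j.isLt)
  obtain ⟨w, hw_mem, hw_indep, hw_deg⟩ :=
    aux_echelon r (∑ k, (p k).natDegree) p le_rfl hp_indep
  have hw_ne : ∀ k, w k ≠ 0 := fun k => hw_indep.ne_zero k
  set d : Fin r → ℕ := fun k => (w k).natDegree with hddef
  have hw_lt : ∀ k, d k < n := by
    intro k
    have hmem : w k ∈ Polynomial.degreeLT F n := by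
      refine Submodule.span_le.mpr ?_ (hw_mem k)
      rintro _ ⟨m, rfl⟩
      exact hdegp m
    exact (Polynomial.natDegree_lt_iff_degree_lt (hw_ne k)).mpr (Polynomial.mem_degreeLT.mp hmem)
  -- coordinates of `w` in terms of `p`
  have hcoord : ∀ k, ∃ b : Fin r → F, ∑ j, b j • p j = w k := fun k =>
    (Submodule.mem_span_range_iff_exists_fun F).mp (hw_mem k)
  choose bb hbb using hcoord
  set B : Matrix (Fin r) (Fin r) F := Matrix.of fun j k => bb k j with hBdef
  have hdetB : B.det ≠ 0 := by
    intro h0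
    obtain ⟨v, hv, hmv⟩ := (Matrix.exists_mulVec_eq_zero_iff).mpr h0
    apply hv
    funext k
    refine Fintype.linearIndependent_iff.mp hw_indep v ?_ k
    have step1 : ∑ k, v k • w k = ∑ j, (B.mulVec v j) • p j := by
      rw [Finset.sum_congr rfl (fun k (_ : k ∈ Finset.univ) => by rw [← hbb k])]
      rw [Finset.sum_congr rfl (fun k (_ : k ∈ Finset.univ) => Finset.smul_sum)]
      rw [Finset.sum_comm]
      apply Finset.sum_congr rfl
      intro j _
      rw [Matrix.mulVec, dotProduct, Finset.sum_smul]
      apply Finset.sum_congr rfl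
      intro k _
      rw [smul_smul, mul_comm]
      rfl
    rw [step1, hmv]
    simp
  -- the matrix `M * B` has entries the coefficients of `w`
  have hMB : ∀ (jj : Fin n) (kk : Fin r), (M * B) jj kk = (w kk).coeff (jj : ℕ) := by
    intro jj kk
    have := congrArg (fun q => Polynomial.coeff q (jj : ℕ)) (hbb kk)
    simp only [Polynomial.finset_sum_coeff, Polynomial.coeff_smul, smul_eq_mul] at this
    rw [← this, Matrix.mul_apply]
    apply Finset.sum_congr rfl
    intro j _
    rw [hLcoeff (Mᵀ j) jj, Matrix.transpose_apply, mul_comm]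
    rfl
  set NN : Matrix (Fin r) (Fin r) K[X] := A * ((M * B).map f) with hNNdef
  have hN : ∀ i k, NN i k = ∑ j : Fin n,
      Polynomial.C ((g ^ (i : ℕ)) ^ (j : ℕ) * algebraMap F K ((w k).coeff (j : ℕ))) *
        Polynomial.X ^ (j : ℕ) := by
    intro i k
    rw [hNNdef, Matrix.mul_apply]
    apply Finset.sum_congr rfl
    intro j _
    rw [Matrix.map_apply, hMB j k, hfapp, hAdef]
    simp only [Matrix.of_apply]
    rw [mul_pow, ← Polynomial.C_pow, Polynomial.C_mul]
    ring
  have hNdeg : ∀ i k, (NN i k).natDegree ≤ d k := by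
    intro i k
    rw [hN]
    apply Polynomial.natDegree_sum_le_of_forall_le
    intro j _
    by_cases hj : (w k).coeff (j : ℕ) = 0
    · simp [hj]
    · exact (Polynomial.natDegree_C_mul_X_pow_le _ _).trans (Polynomial.le_natDegree_of_ne_zero hj)
  have hNcoeff : ∀ i k, (NN i k).coeff (d k)
      = algebraMap F K ((w k).leadingCoeff) * (g ^ (d k)) ^ (i : ℕ) := by
    intro i k
    rw [hN, Polynomial.finset_sum_coeff]
    rw [Finset.sum_eq_single (⟨d k, hw_lt k⟩ : Fin n)]
    · rw [Polynomial.coeff_C_mul, Polynomial.coeff_X_pow, if_pos rfl, mul_one]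
      rw [Polynomial.leadingCoeff]
      ring_nf
      rfl
    · intro j _ hj
      rw [Polynomial.coeff_C_mul, Polynomial.coeff_X_pow,
        if_neg (fun h => hj (Fin.ext h.symm)), mul_zero]
    · intro h
      exact absurd (Finset.mem_univ _) h
  obtain ⟨hdegle, hcoeffeq⟩ := aux_det_coeff NN d hNdeg
  -- the top coefficient is nonzero
  have halg_inj : Function.Injective (algebraMap F K) := (algebraMap F K).injective
  have hx_inj : Function.Injective fun k => g ^ (d k) := by
    intro a b hab
    have : (⟨d a, hw_lt a⟩ : Fin n) = ⟨d b, hw_lt b⟩ := hg hab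
    exact hw_deg (by simpa using congrArg Fin.val this)
  have hvdm : (Matrix.of fun (i k : Fin r) => (g ^ (d k)) ^ (i : ℕ)).det ≠ 0 := by
    have : (Matrix.of fun (i k : Fin r) => (g ^ (d k)) ^ (i : ℕ))
        = (Matrix.vandermonde fun k => g ^ (d k))ᵀ := by
      ext i k
      simp [Matrix.vandermonde]
    rw [this, Matrix.det_transpose, Matrix.det_vandermonde]
    apply Finset.prod_ne_zero_iff.mpr
    intro i _
    apply Finset.prod_ne_zero_iff.mpr
    intro j hj
    exact sub_ne_zero.mpr (fun h => (Finset.mem_Ioi.mp hj).ne' (hx_inj h))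
  have hcoeff_ne : NN.det.coeff (∑ k, d k) ≠ 0 := by
    rw [hcoeffeq]
    have : (Matrix.of fun i k => (NN i k).coeff (d k))
        = Matrix.of fun i k => (algebraMap F K ((w k).leadingCoeff)) *
            ((Matrix.of fun (i k : Fin r) => (g ^ (d k)) ^ (i : ℕ)) i k) := by
      ext i k
      rw [Matrix.of_apply, hNcoeff i k]
      rfl
    rw [this, Matrix.det_mul_row]
    apply mul_ne_zero
    · apply Finset.prod_ne_zero_iff.mpr
      intro k _
      simpa using fun h => (Polynomial.leadingCoeff_ne_zero.mpr (hw_ne k)) (halg_inj (by simpa using h))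
    · exact hvdm
  have hNN_ne : NN.det ≠ 0 := fun h => hcoeff_ne (by rw [h, Polynomial.coeff_zero])
  -- factor the determinant
  have hfact : NN = (A * M.map (fun a => Polynomial.C (algebraMap F K a))) * B.map f := by
    rw [hNNdef, Matrix.map_mul, ← Matrix.mul_assoc]
    rfl
  have hdetBK : (B.map f).det = Polynomial.C (algebraMap F K B.det) := by
    exact (RingHom.map_det f B).symm
  have hCne : Polynomial.C (algebraMap F K B.det) ≠ 0 := by
    rw [Polynomial.C_ne_zero]
    exact fun h => hdetB (halg_inj (by simpa using h))
  have hdet_eq : NN.det = (A * M.map (fun a => Polynomial.C (algebraMap F K a))).det *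
      Polynomial.C (algebraMap F K B.det) := by
    rw [hfact, Matrix.det_mul, hdetBK]
  have hmain_ne : (A * M.map (fun a => Polynomial.C (algebraMap F K a))).det ≠ 0 := by
    intro h
    rw [hdet_eq, h, zero_mul] at hNN_ne
    exact hNN_ne rfl
  constructor
  · exact hmain_ne
  · have hdegeq : NN.det.natDegree
        = (A * M.map (fun a => Polynomial.C (algebraMap F K a))).det.natDegree := by
      rw [hdet_eq, Polynomial.natDegree_mul hmain_ne hCne, Polynomial.natDegree_C, add_zero]
    rw [← hdegeq]
    exact hdegle.trans (aux_sum_le hr hrn d hw_deg hw_lt)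
end

section
/- Let m ≥ n ≥ r ≥ 1, let M be a nonzero n×m matrix of rank ≤ r over F, and let K extend F with g ∈ K of multiplicative order ≥ m. Define the bivariate polynomial f_M(x,y) = Σ_{i,j} M_{i,j} x^i y^j. Then M is nonzero if and only if at least one of the r univariate polynomials f_M(x, g^ℓ x) for ℓ = 0,...,r−1 is nonzero over K. -/
open Polynomial Finset

/-- The polynomial with coefficient vector `v`. -/
noncomputable def pvec {K : Type*} [Semiring K] (m : ℕ) (v : Fin m → K) : K[X] :=
  ∑ j : Fin m, Polynomial.C (v j) * Polynomial.X ^ (j : ℕ)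

lemma coeff_pvec {K : Type*} [Semiring K] (m : ℕ) (v : Fin m → K) (k : ℕ) :
    (pvec m v).coeff k = if h : k < m then v ⟨k, h⟩ else 0 := by
  rw [pvec, finset_sum_coeff]
  simp only [coeff_C_mul, coeff_X_pow, mul_ite, mul_one, mul_zero]
  split_ifs with h
  · rw [Finset.sum_eq_single (⟨k, h⟩ : Fin m)]
    · simp
    · intro j _ hj
      rw [if_neg]
      intro hc
      exact hj (Fin.ext hc.symm)
    · simp
  · apply Finset.sum_eq_zero
    intro j _
    rw [if_neg]
    intro hc
    exact h (hc ▸ j.isLt)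

lemma pvec_eq_zero_iff {K : Type*} [Semiring K] (m : ℕ) (v : Fin m → K) :
    pvec m v = 0 ↔ v = 0 := by
  constructor
  · intro h
    funext j
    have := congrArg (fun p => Polynomial.coeff p (j : ℕ)) h
    simpa [coeff_pvec, j.isLt] using this
  · intro h; simp [h, pvec]

lemma natDegree_pvec_lt {K : Type*} [Semiring K] (m : ℕ) (v : Fin m → K) (hv : v ≠ 0) :
    (pvec m v).natDegree < m := by
  have hp : pvec m v ≠ 0 := fun h => hv ((pvec_eq_zero_iff m v).mp h)
  by_contra h
  push_neg at h
  have : (pvec m v).coeff (pvec m v).natDegree = 0 := by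
    rw [coeff_pvec, dif_neg (by omega)]
  exact hp (Polynomial.leadingCoeff_eq_zero.mp this)

lemma coeff_prod_of_natDegree_le' {R : Type*} [CommSemiring R] {ι : Type*} (s : Finset ι)
    (f : ι → R[X]) (d : ι → ℕ) (h : ∀ i ∈ s, (f i).natDegree ≤ d i) :
    (∏ i ∈ s, f i).coeff (∑ i ∈ s, d i) = ∏ i ∈ s, (f i).coeff (d i) := by
  classical
  induction s using Finset.induction_on with
  | empty => simp
  | insert a s hni ih =>
    rw [Finset.prod_insert hni, Finset.sum_insert hni,
      Polynomial.coeff_mul_add_eq_of_natDegree_le (h a (Finset.mem_insert_self a s))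
        ((Polynomial.natDegree_prod_le s f).trans
          (Finset.sum_le_sum fun i hi => h i (Finset.mem_insert_of_mem hi))),
      ih fun i hi => h i (Finset.mem_insert_of_mem hi), Finset.prod_insert hni]

lemma reduce_step {K : Type*} [Field K] {m ρ : ℕ} (w : Fin ρ → Fin m → K)
    (hw0 : ∀ s, w s ≠ 0) :
    ∀ N : ℕ, ∀ v : Fin m → K, (pvec m v).natDegree = N →
    ∃ v' : Fin m → K, (v - v') ∈ Submodule.span K (Set.range w) ∧
      (v' = 0 ∨ (v' ≠ 0 ∧ ∀ s, (pvec m (w s)).natDegree ≠ (pvec m v').natDegree)) := by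
  intro N
  induction N using Nat.strong_induction_on with
  | _ N ih =>
    intro v hN
    by_cases hv : v = 0
    · exact ⟨0, by simp [hv], Or.inl rfl⟩
    by_cases hfresh : ∀ s, (pvec m (w s)).natDegree ≠ (pvec m v).natDegree
    · exact ⟨v, by simp, Or.inr ⟨hv, hfresh⟩⟩
    push_neg at hfresh
    obtain ⟨s, hs⟩ := hfresh
    have hdm : (pvec m v).natDegree < m := natDegree_pvec_lt m v hv
    set dv := (pvec m v).natDegree with hdv
    have hb : w s ⟨dv, hdm⟩ ≠ 0 := by
      have h1 : (pvec m (w s)).coeff dv ≠ 0 := by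
        rw [← hs]
        exact Polynomial.leadingCoeff_ne_zero.mpr
          (fun h => hw0 s ((pvec_eq_zero_iff m (w s)).mp h))
      rwa [coeff_pvec, dif_pos hdm] at h1
    set a := v ⟨dv, hdm⟩ / w s ⟨dv, hdm⟩ with ha
    set v₂ := v - a • w s with hv₂
    have hmem : v - v₂ ∈ Submodule.span K (Set.range w) := by
      have : v - v₂ = a • w s := by rw [hv₂]; abel
      rw [this]
      exact Submodule.smul_mem _ _ (Submodule.subset_span (Set.mem_range_self s))
    have hcoeff : ∀ k : ℕ, dv ≤ k → (pvec m v₂).coeff k = 0 := by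
      intro k hk
      rw [coeff_pvec]
      split_ifs with h
      · have hv₂k : v₂ ⟨k, h⟩ = v ⟨k, h⟩ - a * w s ⟨k, h⟩ := rfl
        rcases eq_or_lt_of_le hk with hkeq | hklt
        · subst hkeq
          rw [hv₂k, ha, div_mul_cancel₀ _ hb, sub_self]
        · have h1 : v ⟨k, h⟩ = 0 := by
            have := Polynomial.coeff_eq_zero_of_natDegree_lt (p := pvec m v) (n := k) hklt
            rwa [coeff_pvec, dif_pos h] at this
          have h2 : w s ⟨k, h⟩ = 0 := by
            have := Polynomial.coeff_eq_zero_of_natDegree_lt (p := pvec m (w s)) (n := k)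
              (by rw [hs]; exact hklt)
            rwa [coeff_pvec, dif_pos h] at this
          rw [hv₂k, h1, h2, mul_zero, sub_zero]
      · rfl
    by_cases hz : v₂ = 0
    · refine ⟨0, ?_, Or.inl rfl⟩
      have : v - 0 = v - v₂ := by rw [hz]
      rw [this]; exact hmem
    · have hlt : (pvec m v₂).natDegree < N := by
        rw [← hN]
        by_contra hc
        push_neg at hc
        have := hcoeff (pvec m v₂).natDegree hc
        exact (fun h => hz ((pvec_eq_zero_iff m v₂).mp h))
          (Polynomial.leadingCoeff_eq_zero.mp this)
      obtain ⟨v', h1, h2⟩ := ih _ hlt v₂ rfl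
      refine ⟨v', ?_, h2⟩
      have : v - v' = (v - v₂) + (v₂ - v') := by abel
      rw [this]
      exact Submodule.add_mem _ hmem h1

lemma reduce {K : Type*} [Field K] {m : ℕ} :
    ∀ (k : ℕ) (u : Fin k → Fin m → K),
    ∃ ρ, ρ ≤ k ∧ ∃ w : Fin ρ → Fin m → K,
      (∀ s, w s ≠ 0) ∧ (Function.Injective fun s => (pvec m (w s)).natDegree) ∧
      ∀ t, u t ∈ Submodule.span K (Set.range w) := by
  intro k
  induction k with
  | zero =>
    intro u
    exact ⟨0, le_refl 0, Fin.elim0, fun s => s.elim0, fun s => s.elim0, fun t => t.elim0⟩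
  | succ k ih =>
    intro u
    obtain ⟨ρ, hρ, w, hw0, hwinj, hspan⟩ := ih (fun t => u t.castSucc)
    obtain ⟨v', hv'mem, hv'⟩ := reduce_step w hw0 _ (u (Fin.last k)) rfl
    rcases hv' with hz | ⟨hne, hfresh⟩
    · refine ⟨ρ, hρ.trans (Nat.le_succ k), w, hw0, hwinj, ?_⟩
      intro t
      induction t using Fin.lastCases with
      | last =>
        have : u (Fin.last k) = u (Fin.last k) - v' := by rw [hz]; abel
        rw [this]; exact hv'mem
      | cast t => exact hspan t
    · refine ⟨ρ + 1, Nat.succ_le_succ hρ, Fin.snoc w v', ?_, ?_, ?_⟩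
      · intro s
        induction s using Fin.lastCases with
        | last => rw [Fin.snoc_last]; exact hne
        | cast s => rw [Fin.snoc_castSucc]; exact hw0 s
      · intro s t hst
        simp only at hst
        induction s using Fin.lastCases with
        | last =>
          induction t using Fin.lastCases with
          | last => rfl
          | cast t =>
            rw [Fin.snoc_last, Fin.snoc_castSucc] at hst
            exact absurd hst.symm (hfresh t)
        | cast s =>
          induction t using Fin.lastCases with
          | last =>
            rw [Fin.snoc_last, Fin.snoc_castSucc] at hst
            exact absurd hst (hfresh s)
          | cast t =>
            rw [Fin.snoc_castSucc, Fin.snoc_castSucc] at hst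
            rw [hwinj hst]
      · have hsub : Set.range w ⊆ Set.range (Fin.snoc w v' : Fin (ρ+1) → Fin m → K) := by
          rintro x ⟨s, rfl⟩
          exact ⟨s.castSucc, Fin.snoc_castSucc _ _ _⟩
        intro t
        induction t using Fin.lastCases with
        | last =>
          have : u (Fin.last k) = (u (Fin.last k) - v') + v' := by abel
          rw [this]
          refine Submodule.add_mem _ (Submodule.span_mono hsub hv'mem) ?_
          exact Submodule.subset_span ⟨Fin.last ρ, Fin.snoc_last _ _⟩
        | cast t => exact Submodule.span_mono hsub (hspan t)


/-- A rank ≤ r matrix M is nonzero iff one of the r univariate polynomials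
`f_M(x, gˡ x)` is nonzero. -/
theorem matrix_nonzero_iff_univariate {F K : Type*} [Field F] [Field K] [Algebra F K]
    (n m r : ℕ) (hr : 1 ≤ r) (hrn : r ≤ n) (hnm : n ≤ m)
    (M : Matrix (Fin n) (Fin m) F) (hM : M.rank ≤ r)
    (g : K) (hg : Function.Injective fun i : Fin m => g ^ (i : ℕ)) :
    M ≠ 0 ↔ ∃ ℓ < r,
      (∑ i : Fin n, ∑ j : Fin m,
        Polynomial.C (algebraMap F K (M i j) * g ^ (ℓ * (j : ℕ))) *
          Polynomial.X ^ ((i : ℕ) + (j : ℕ))) ≠ 0 := by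
  classical
  constructor
  · intro hMne
    by_contra hcon
    push_neg at hcon
    set φ := algebraMap F K with hφ
    set N : Fin n → Fin m → K := fun i j => φ (M i j) with hNdef
    -- row span of M has dimension ≤ r
    have hrank : Module.finrank F ↥(Submodule.span F (Set.range M)) ≤ r := by
      exact (Matrix.rank_eq_finrank_span_row M).symm.le.trans hM
    set V := Submodule.span F (Set.range M) with hV
    set ρ₀ := Module.finrank F ↥V with hρ₀
    have hfd : FiniteDimensional F ↥V := inferInstance
    set b : Module.Basis (Fin ρ₀) F ↥V := Module.finBasis F ↥V with hb
    set u : Fin ρ₀ → Fin m → K := fun s j => φ ((b s : Fin m → F) j) with hu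
    have hNspan : ∀ i, N i ∈ Submodule.span K (Set.range u) := by
      intro i
      have hMi : M i ∈ V := Submodule.subset_span (Set.mem_range_self i)
      have hrepr : M i = ∑ s, b.repr ⟨M i, hMi⟩ s • ((b s : Fin m → F)) := by
        have h2 := congrArg (Subtype.val) (b.sum_repr ⟨M i, hMi⟩)
        simp only [AddSubmonoidClass.coe_finset_sum, SetLike.val_smul] at h2
        exact h2.symm
      rw [Submodule.mem_span_range_iff_exists_fun]
      refine ⟨fun s => φ (b.repr ⟨M i, hMi⟩ s), ?_⟩
      funext j
      have := congrFun hrepr j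
      simp only [Finset.sum_apply, Pi.smul_apply, smul_eq_mul] at this
      simp only [Finset.sum_apply, Pi.smul_apply, smul_eq_mul, hNdef, hu, this,
        map_sum, map_mul]
    obtain ⟨ρ, hρk, w, hw0, hwinj, hwspan⟩ := reduce ρ₀ u
    have hρr : ρ ≤ r := hρk.trans hrank
    have hNw : ∀ i, ∃ c : Fin ρ → K, ∑ s, c s • w s = N i := by
      intro i
      rw [← Submodule.mem_span_range_iff_exists_fun]
      refine Submodule.span_le.mpr ?_ (hNspan i)
      rintro x ⟨t, rfl⟩
      exact hwspan t
    choose c hc using hNw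
    set d : Fin ρ → ℕ := fun s => (pvec m (w s)).natDegree with hd
    have hpw : ∀ s, pvec m (w s) ≠ 0 := fun s h => hw0 s ((pvec_eq_zero_iff m (w s)).mp h)
    have hdm : ∀ s, d s < m := fun s => natDegree_pvec_lt m (w s) (hw0 s)
    set B : Matrix (Fin ρ) (Fin ρ) (Polynomial K) :=
      fun s ℓ => pvec m (fun j => w s j * g ^ ((ℓ : ℕ) * (j : ℕ))) with hB
    set A : Fin ρ → Polynomial K := fun s => pvec n (fun i => c i s) with hA
    -- the linear relation
    have hrel : ∀ ℓ : Fin ρ, ∑ s, A s * B s ℓ = 0 := by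
      intro ℓ
      have hz := hcon (ℓ : ℕ) (lt_of_lt_of_le ℓ.isLt hρr)
      have e1 : ∀ i : Fin n,
          (∑ j : Fin m, Polynomial.C (φ (M i j) * g ^ ((ℓ : ℕ) * (j : ℕ))) *
            Polynomial.X ^ ((i : ℕ) + (j : ℕ)))
          = Polynomial.X ^ (i : ℕ) * pvec m (fun j => N i j * g ^ ((ℓ : ℕ) * (j : ℕ))) := by
        intro i
        rw [pvec, Finset.mul_sum]
        refine Finset.sum_congr rfl fun j _ => ?_
        rw [pow_add]; ring
      have e2 : ∀ i : Fin n, pvec m (fun j => N i j * g ^ ((ℓ : ℕ) * (j : ℕ)))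
          = ∑ s, Polynomial.C (c i s) * B s ℓ := by
        intro i
        conv_lhs => rw [← hc i]
        simp only [pvec, hB, Finset.sum_apply, Pi.smul_apply, smul_eq_mul, Finset.sum_mul,
          map_sum, map_mul, Finset.mul_sum, mul_assoc]
        rw [Finset.sum_comm]
      calc ∑ s, A s * B s ℓ
          = ∑ s, ∑ i : Fin n, (Polynomial.C (c i s) * Polynomial.X ^ (i : ℕ)) * B s ℓ := by
            refine Finset.sum_congr rfl fun s _ => ?_
            rw [hA]
            simp only [pvec, Finset.sum_mul]
        _ = ∑ i : Fin n, ∑ s, Polynomial.X ^ (i : ℕ) * (Polynomial.C (c i s) * B s ℓ) := by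
            rw [Finset.sum_comm]
            exact Finset.sum_congr rfl fun i _ => Finset.sum_congr rfl fun s _ => by ring
        _ = ∑ i : Fin n, Polynomial.X ^ (i : ℕ) * (∑ s, Polynomial.C (c i s) * B s ℓ) := by
            exact Finset.sum_congr rfl fun i _ => (Finset.mul_sum _ _ _).symm
        _ = ∑ i : Fin n, Polynomial.X ^ (i : ℕ) *
              pvec m (fun j => N i j * g ^ ((ℓ : ℕ) * (j : ℕ))) := by
            exact Finset.sum_congr rfl fun i _ => by rw [e2 i]
        _ = ∑ i : Fin n, ∑ j : Fin m, Polynomial.C (φ (M i j) * g ^ ((ℓ : ℕ) * (j : ℕ))) *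
              Polynomial.X ^ ((i : ℕ) + (j : ℕ)) :=
            Finset.sum_congr rfl fun i _ => (e1 i).symm
        _ = 0 := hz
    -- the determinant is nonzero
    have hdet : B.det ≠ 0 := by
      set D := ∑ s, d s with hD
      have hBle : ∀ s ℓ : Fin ρ, (B s ℓ).natDegree ≤ d s := by
        intro s ℓ
        rw [Polynomial.natDegree_le_iff_coeff_eq_zero]
        intro k hk
        show (pvec m (fun j => w s j * g ^ ((ℓ : ℕ) * (j : ℕ)))).coeff k = 0
        rw [coeff_pvec]
        split_ifs with h
        · have hwk : w s ⟨k, h⟩ = 0 := by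
            have := Polynomial.coeff_eq_zero_of_natDegree_lt (p := pvec m (w s)) (n := k) hk
            rwa [coeff_pvec, dif_pos h] at this
          rw [hwk, zero_mul]
        · rfl
      have hBcoeff : ∀ s ℓ : Fin ρ,
          (B s ℓ).coeff (d s) = w s ⟨d s, hdm s⟩ * (g ^ d s) ^ (ℓ : ℕ) := by
        intro s ℓ
        show (pvec m (fun j => w s j * g ^ ((ℓ : ℕ) * (j : ℕ)))).coeff (d s) = _
        rw [coeff_pvec, dif_pos (hdm s), ← pow_mul, Nat.mul_comm]
      have hlead : ∀ s, w s ⟨d s, hdm s⟩ ≠ 0 := by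
        intro s
        have h1 := Polynomial.leadingCoeff_ne_zero.mpr (hpw s)
        rwa [Polynomial.leadingCoeff, coeff_pvec, dif_pos (hdm s)] at h1
      have hvdm : (Matrix.vandermonde fun s => g ^ d s).det ≠ 0 := by
        rw [Matrix.det_vandermonde_ne_zero_iff]
        intro s t h
        have h2 : (⟨d s, hdm s⟩ : Fin m) = ⟨d t, hdm t⟩ := hg (by simpa using h)
        exact hwinj (show d s = d t from congrArg Fin.val h2)
      have hco : (B.det).coeff D =
          (∏ s, w s ⟨d s, hdm s⟩) * (Matrix.vandermonde fun s => g ^ d s).det := by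
        rw [Matrix.det_apply', Polynomial.finset_sum_coeff]
        have hterm : ∀ σ : Equiv.Perm (Fin ρ),
            (((Equiv.Perm.sign σ : ℤ) : Polynomial K) * ∏ i, B (σ i) i).coeff D =
              ((Equiv.Perm.sign σ : ℤ) : K) *
                ∏ i, (w (σ i) ⟨d (σ i), hdm (σ i)⟩ * (g ^ d (σ i)) ^ (i : ℕ)) := by
          intro σ
          rw [Polynomial.coeff_intCast_mul]
          congr 1
          rw [show D = ∑ i, d (σ i) from (Equiv.sum_comp σ d).symm,
            coeff_prod_of_natDegree_le' Finset.univ _ _ (fun i _ => hBle (σ i) i)]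
          exact Finset.prod_congr rfl fun i _ => hBcoeff (σ i) i
        rw [Finset.sum_congr rfl fun σ _ => hterm σ]
        have := (Matrix.det_apply' (fun s t : Fin ρ =>
          w s ⟨d s, hdm s⟩ * (g ^ d s) ^ (t : ℕ))).symm
        rw [this]
        have hfac : (fun s t : Fin ρ => w s ⟨d s, hdm s⟩ * (g ^ d s) ^ (t : ℕ)) =
            Matrix.diagonal (fun s => w s ⟨d s, hdm s⟩) *
              Matrix.vandermonde (fun s => g ^ d s) := by
          ext s t
          rw [Matrix.diagonal_mul, Matrix.vandermonde_apply]
        rw [hfac, Matrix.det_mul, Matrix.det_diagonal]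
      intro h0
      rw [h0, Polynomial.coeff_zero] at hco
      exact mul_ne_zero (Finset.prod_ne_zero_iff.mpr fun s _ => hlead s) hvdm hco.symm
    -- conclude A = 0
    have hA0 : ∀ s, A s = 0 := by
      have hvm : Matrix.vecMul A B = 0 := by
        funext ℓ
        simpa [Matrix.vecMul, dotProduct] using hrel ℓ
      have h1 : Matrix.vecMul (Matrix.vecMul A B) B.adjugate = 0 := by
        rw [hvm]; funext s; simp [Matrix.vecMul, dotProduct]
      rw [Matrix.vecMul_vecMul, Matrix.mul_adjugate] at h1
      intro s
      have h2 := congrFun h1 s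
      simp only [Matrix.vecMul, dotProduct, Matrix.smul_apply, Matrix.one_apply,
        smul_eq_mul, mul_ite, mul_one, mul_zero, Pi.zero_apply] at h2
      rw [Finset.sum_ite_eq' Finset.univ s] at h2
      simp only [Finset.mem_univ, if_true] at h2
      rcases mul_eq_zero.mp h2 with h | h
      · exact h
      · exact absurd h hdet
    -- so M = 0, contradiction
    apply hMne
    have hc0 : ∀ i s, c i s = 0 := by
      intro i s
      have := congrArg (fun p => Polynomial.coeff p (i : ℕ)) (hA0 s)
      simpa [hA, coeff_pvec, i.isLt] using this
    ext i j
    have := congrFun (hc i) j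
    simp only [Finset.sum_apply, Pi.smul_apply, smul_eq_mul] at this
    simp only [hc0, zero_mul, Finset.sum_const_zero] at this
    have hφinj : Function.Injective φ := (algebraMap F K).injective
    have h3 : φ (M i j) = 0 := this.symm
    exact hφinj (h3.trans (map_zero φ).symm)
  · rintro ⟨ℓ, hℓ, hne⟩ hM0
    apply hne
    rw [hM0]
    simp
end

section
/- Let F be a field, g_0,...,g_{n-1} ∈ F distinct, V ∈ F^{2s×n} with V_{i,j} = g_j^i, and S ⊆ {0,...,n-1} with |S| ≤ 2s. If x, w ∈ F^n each have at most s − |S|/2 nonzero entries outside S and Vx = Vw, then x = w. -/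
/-- Advice-sparse recovery from dual Reed–Solomon measurements: vectors with at most
`s - |S|/2` nonzero entries outside `S` are determined by their measurements. -/
theorem vandermonde_advice_sparse_recovery {F : Type*} [Field F] (n s : ℕ)
    (g : Fin n → F) (hg : Function.Injective g)
    (V : Matrix (Fin (2 * s)) (Fin n) F) (hV : ∀ i j, V i j = g j ^ (i : ℕ))
    (S : Finset (Fin n)) (hS : S.card ≤ 2 * s)
    (x w : Fin n → F)
    (hx : 2 * {j | x j ≠ 0 ∧ j ∉ S}.ncard + S.card ≤ 2 * s)
    (hw : 2 * {j | w j ≠ 0 ∧ j ∉ S}.ncard + S.card ≤ 2 * s)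
    (h : V.mulVec x = V.mulVec w) : x = w := by
  classical
  set y : Fin n → F := x - w with hy
  have hVy : V.mulVec y = 0 := by
    rw [hy, Matrix.mulVec_sub, h, sub_self]
  suffices hy0 : y = 0 by
    funext j
    have := congrFun hy0 j
    simpa [hy, sub_eq_zero] using this
  -- convert ncard to Finset card
  have hxc : {j | x j ≠ 0 ∧ j ∉ S}.ncard
      = (Finset.univ.filter (fun j => x j ≠ 0 ∧ j ∉ S)).card := by
    rw [Set.ncard_eq_toFinset_card']; congr 1; ext j; simp
  have hwc : {j | w j ≠ 0 ∧ j ∉ S}.ncard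
      = (Finset.univ.filter (fun j => w j ≠ 0 ∧ j ∉ S)).card := by
    rw [Set.ncard_eq_toFinset_card']; congr 1; ext j; simp
  set T : Finset (Fin n) :=
    S ∪ Finset.univ.filter (fun j => x j ≠ 0 ∧ j ∉ S)
      ∪ Finset.univ.filter (fun j => w j ≠ 0 ∧ j ∉ S) with hT
  have hTcard : T.card ≤ 2 * s := by
    have h1 := Finset.card_union_le
      (S ∪ Finset.univ.filter (fun j => x j ≠ 0 ∧ j ∉ S))
      (Finset.univ.filter (fun j => w j ≠ 0 ∧ j ∉ S))
    have h2 := Finset.card_union_le S (Finset.univ.filter (fun j => x j ≠ 0 ∧ j ∉ S))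
    rw [hxc] at hx
    rw [hwc] at hw
    simp only [hT]
    omega
  have hyT : ∀ j, j ∉ T → y j = 0 := by
    intro j hj
    simp only [hT, Finset.mem_union, Finset.mem_filter, Finset.mem_univ, true_and,
      not_or] at hj
    obtain ⟨⟨hjS, hjx⟩, hjw⟩ := hj
    have hx0 : x j = 0 := by by_contra hc; exact hjx ⟨hc, hjS⟩
    have hw0 : w j = 0 := by by_contra hc; exact hjw ⟨hc, hjS⟩
    simp [hy, hx0, hw0]
  by_contra hne
  obtain ⟨j0, hj0⟩ : ∃ j0, y j0 ≠ 0 := by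
    by_contra hc
    push_neg at hc
    exact hne (funext hc)
  have hj0T : j0 ∈ T := by by_contra hc; exact hj0 (hyT j0 hc)
  have hinj : Set.InjOn g T := fun a _ b _ hab => hg hab
  set q : Polynomial F := Lagrange.basis T g j0 with hq
  have hdeg : q.natDegree < 2 * s := by
    rw [hq, Lagrange.natDegree_basis hinj hj0T]
    have : 1 ≤ T.card := Finset.card_pos.mpr ⟨j0, hj0T⟩
    omega
  have sum1 : ∑ j, y j * q.eval (g j) = y j0 := by
    rw [Finset.sum_eq_single j0]
    · rw [hq, Lagrange.eval_basis_self hinj hj0T, mul_one]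
    · intro j _ hjne
      by_cases hjT : j ∈ T
      · rw [hq, Lagrange.eval_basis_of_ne (Ne.symm hjne) hjT, mul_zero]
      · rw [hyT j hjT, zero_mul]
    · intro hc; exact absurd (Finset.mem_univ j0) hc
  have sum2 : ∑ j, y j * q.eval (g j) = 0 := by
    have heval : ∀ j : Fin n, q.eval (g j)
        = ∑ i : Fin (2 * s), q.coeff i * g j ^ (i : ℕ) := by
      intro j
      rw [Polynomial.eval_eq_sum_range' hdeg (g j), Finset.sum_range fun i => q.coeff i * g j ^ i]
    calc ∑ j, y j * q.eval (g j)
        = ∑ j, ∑ i : Fin (2 * s), q.coeff i * (g j ^ (i : ℕ) * y j) := by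
          refine Finset.sum_congr rfl fun j _ => ?_
          rw [heval j, Finset.mul_sum]
          exact Finset.sum_congr rfl fun i _ => by ring
      _ = ∑ i : Fin (2 * s), q.coeff i * ∑ j, g j ^ (i : ℕ) * y j := by
          rw [Finset.sum_comm]
          exact Finset.sum_congr rfl fun i _ => (Finset.mul_sum _ _ _).symm
      _ = 0 := by
          refine Finset.sum_eq_zero fun i _ => ?_
          have : (V.mulVec y) i = 0 := by rw [hVy]; rfl
          rw [Matrix.mulVec, dotProduct] at this
          simp_rw [hV] at this
          rw [this, mul_zero]
  exact hj0 (sum1 ▸ sum2 ▸ rfl)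
end

section
/- Let x be an r-sparse vector in F^n, g an element of order ≥ n in an extension K of F, and A the 2r×n matrix with A_{i,j} = g^{ij}. Then x is uniquely determined by Ax: if y is another r-sparse vector with Ay = Ax then y = x. -/
/-- An r-sparse vector is determined by its 2r dual Reed–Solomon measurements. -/
theorem dual_rs_sparse_recovery {F K : Type*} [Field F] [Field K] [Algebra F K]
    (n r : ℕ) (g : K) (hg : Function.Injective fun i : Fin n => g ^ (i : ℕ))
    (A : Matrix (Fin (2 * r)) (Fin n) K) (hA : ∀ i j, A i j = g ^ ((i : ℕ) * (j : ℕ)))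
    (x y : Fin n → F)
    (hx : {j | x j ≠ 0}.ncard ≤ r) (hy : {j | y j ≠ 0}.ncard ≤ r)
    (h : A.mulVec (fun j => algebraMap F K (x j)) =
         A.mulVec (fun j => algebraMap F K (y j))) :
    x = y := by
  classical
  set c : Fin n → K := fun j => algebraMap F K (x j) - algebraMap F K (y j) with hc
  -- the support of c
  set S : Finset (Fin n) := Finset.univ.filter fun j => c j ≠ 0 with hS
  have hcS : ∀ j, j ∉ S → c j = 0 := by
    intro j hj
    by_contra hne
    exact hj (by simp [hS, hne])
  -- card bound
  have hSsub : ↑S ⊆ {j | x j ≠ 0} ∪ {j | y j ≠ 0} := by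
    intro j hj
    simp only [hS, Finset.coe_filter, Set.mem_setOf_eq, Finset.mem_univ, true_and] at hj
    by_contra hcon
    simp only [Set.mem_union, Set.mem_setOf_eq, not_or, not_not] at hcon
    apply hj
    simp [hc, hcon.1, hcon.2]
  have hScard : S.card ≤ 2 * r := by
    have h1 : ({j | x j ≠ 0} ∪ {j | y j ≠ 0}).ncard ≤ 2 * r := by
      have := Set.ncard_union_le {j | x j ≠ 0} {j | y j ≠ 0}
      omega
    have h2 : (↑S : Set (Fin n)).ncard ≤ ({j | x j ≠ 0} ∪ {j | y j ≠ 0}).ncard :=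
      Set.ncard_le_ncard hSsub (Set.toFinite _)
    simpa [Set.ncard_coe_finset] using h2.trans h1
  -- measurements vanish
  have hmeas : ∀ i : Fin (2 * r), ∑ j ∈ S, c j * g ^ ((i : ℕ) * (j : ℕ)) = 0 := by
    intro i
    have h0 : ∑ j, c j * g ^ ((i : ℕ) * (j : ℕ)) = 0 := by
      have hh := congrFun h i
      simp only [Matrix.mulVec, dotProduct, hA] at hh
      calc ∑ j : Fin n, c j * g ^ ((i : ℕ) * (j : ℕ))
          = (∑ j : Fin n, g ^ ((i : ℕ) * (j : ℕ)) * algebraMap F K (x j))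
            - ∑ j : Fin n, g ^ ((i : ℕ) * (j : ℕ)) * algebraMap F K (y j) := by
            rw [← Finset.sum_sub_distrib]
            exact Finset.sum_congr rfl fun j _ => by show c j * _ = _; rw [hc]; ring
        _ = 0 := by rw [hh, sub_self]
    rw [← h0]
    exact Finset.sum_subset (Finset.subset_univ S)
      (fun j _ hj => mul_eq_zero_of_left (hcS j hj) _)
  -- nodes
  set v : Fin n → K := fun j => g ^ (j : ℕ) with hv
  have hvinj : Set.InjOn v ↑S := fun a _ b _ hab => hg hab
  -- for any polynomial of degree < 2r, the weighted sum of evaluations vanishes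
  have key : ∀ p : Polynomial K, p.natDegree < 2 * r →
      ∑ j ∈ S, c j * p.eval (v j) = 0 := by
    intro p hp
    have step : ∑ j ∈ S, c j * p.eval (v j)
        = ∑ j ∈ S, ∑ i ∈ Finset.range (2 * r), p.coeff i * (c j * g ^ (i * (j : ℕ))) := by
      refine Finset.sum_congr rfl fun j _ => ?_
      rw [Polynomial.eval_eq_sum_range' hp, Finset.mul_sum]
      refine Finset.sum_congr rfl fun i _ => ?_
      have hpow : (v j) ^ i = g ^ (i * (j : ℕ)) := by
        rw [hv, ← pow_mul, Nat.mul_comm]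
      rw [hpow]; ring
    rw [step, Finset.sum_comm]
    refine Finset.sum_eq_zero fun i hi => ?_
    rw [← Finset.mul_sum, hmeas ⟨i, Finset.mem_range.mp hi⟩, mul_zero]
  -- conclude c = 0
  have hczero : ∀ j, c j = 0 := by
    intro j0
    by_contra hne
    have hj0 : j0 ∈ S := by simp [hS, hne]
    have hScard1 : 1 ≤ S.card := Finset.card_pos.mpr ⟨j0, hj0⟩
    have hdeg : (Lagrange.basis S v j0).natDegree < 2 * r := by
      rw [Lagrange.natDegree_basis hvinj hj0]
      omega
    have := key _ hdeg
    rw [Finset.sum_eq_single j0 (fun b hb hb' => by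
      rw [Lagrange.eval_basis_of_ne (Ne.symm hb') hb, mul_zero])
      (fun hb => absurd hj0 hb)] at this
    rw [Lagrange.eval_basis_self hvinj hj0, mul_one] at this
    exact hne this
  funext j
  have h1 : algebraMap F K (x j) = algebraMap F K (y j) := by
    have h2 := hczero j
    simp only [hc] at h2
    exact sub_eq_zero.mp h2
  exact (algebraMap F K).injective h1
end

section
/- Let M be an n×m matrix of rank ≤ r over a field that is in (<k)-upper-echelon form. Then the number of leading nonzero entries of M lying in the (<k)-diagonals is at most r, and no two such leading nonzero entries share the same column. -/
/-- `(i,j)` is a leading nonzero entry of `M`. -/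
def Matrix.IsLNE {F : Type*} [Field F] {n m : ℕ} (M : Matrix (Fin n) (Fin m) F)
    (i : Fin n) (j : Fin m) : Prop :=
  M i j ≠ 0 ∧ ∀ j' : Fin m, j' < j → M i j' = 0

/-- `M` is in `(<k)`-upper-echelon form. -/
def Matrix.UpperEchelonLt {F : Type*} [Field F] {n m : ℕ} (M : Matrix (Fin n) (Fin m) F)
    (k : ℕ) : Prop :=
  ∀ i : Fin n, ∀ j : Fin m, M.IsLNE i j → (i : ℕ) + (j : ℕ) < k →
    ∀ i' : Fin n, (i : ℕ) < (i' : ℕ) → (i' : ℕ) + (j : ℕ) < k → M i' j = 0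

/-- In a rank ≤ r matrix in (<k)-upper-echelon form, there are at most r leading
nonzero entries within the (<k)-diagonals, with pairwise distinct columns. -/
theorem upperEchelon_lne_card_le {F : Type*} [Field F] {n m r k : ℕ}
    (M : Matrix (Fin n) (Fin m) F) (hrank : M.rank ≤ r) (hech : M.UpperEchelonLt k) :
    {p : Fin n × Fin m | M.IsLNE p.1 p.2 ∧ (p.1 : ℕ) + (p.2 : ℕ) < k}.ncard ≤ r ∧
    ∀ p ∈ {p : Fin n × Fin m | M.IsLNE p.1 p.2 ∧ (p.1 : ℕ) + (p.2 : ℕ) < k},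
      ∀ q ∈ {p : Fin n × Fin m | M.IsLNE p.1 p.2 ∧ (p.1 : ℕ) + (p.2 : ℕ) < k},
        p.2 = q.2 → p = q := by
  classical
  set S := {p : Fin n × Fin m | M.IsLNE p.1 p.2 ∧ (p.1 : ℕ) + (p.2 : ℕ) < k} with hS
  -- distinct columns
  have hcol : ∀ p ∈ S, ∀ q ∈ S, p.2 = q.2 → p = q := by
    intro p hp q hq hpq
    by_contra hne
    have hrow : p.1 ≠ q.1 := by
      intro h; exact hne (Prod.ext h hpq)
    rcases lt_or_gt_of_ne (Fin.val_ne_of_ne hrow) with h | h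
    · exact hq.1.1 (hpq ▸ hech p.1 p.2 hp.1 hp.2 q.1 h (hpq ▸ hq.2))
    · exact hp.1.1 (hpq ▸ hech q.1 q.2 hq.1 hq.2 p.1 h (hpq ▸ hp.2))
  refine ⟨?_, hcol⟩
  haveI : Fintype S := Fintype.ofFinite S
  -- the rows of the points in S are linearly independent
  have hli : LinearIndependent F (fun p : S => M p.1.1) := by
    rw [Fintype.linearIndependent_iff]
    intro g hg
    by_contra hgn
    push_neg at hgn
    obtain ⟨p, hpmem, hpmin⟩ := Finset.exists_min_image
      (Finset.univ.filter (fun i : S => g i ≠ 0)) (fun i : S => (i.1.2 : ℕ))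
      (by
        obtain ⟨i, hi⟩ := hgn
        exact ⟨i, Finset.mem_filter.2 ⟨Finset.mem_univ _, hi⟩⟩)
    have hgp : g p ≠ 0 := (Finset.mem_filter.1 hpmem).2
    have hrow := congrFun hg p.1.2
    simp only [Finset.sum_apply, Pi.smul_apply, smul_eq_mul, Pi.zero_apply] at hrow
    have hsum : ∑ i : S, g i * M i.1.1 p.1.2 = g p * M p.1.1 p.1.2 := by
      apply Finset.sum_eq_single
      · intro q _ hqp
        by_cases hgq : g q = 0
        · simp [hgq]
        have hqmem : q ∈ Finset.univ.filter (fun i : S => g i ≠ 0) :=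
          Finset.mem_filter.2 ⟨Finset.mem_univ _, hgq⟩
        have hle : (p.1.2 : ℕ) ≤ (q.1.2 : ℕ) := hpmin q hqmem
        have hnecol : p.1.2 ≠ q.1.2 := by
          intro h
          exact hqp (Subtype.ext (hcol q.1 q.2 p.1 p.2 h.symm))
        have hlt : p.1.2 < q.1.2 := Fin.lt_def.mpr
          (lt_of_le_of_ne hle (fun h => hnecol (Fin.ext h)))
        rw [q.2.1.2 p.1.2 hlt, mul_zero]
      · intro h; exact absurd (Finset.mem_univ p) h
    rw [hsum] at hrow
    exact p.2.1.1 ((mul_eq_zero.1 hrow).resolve_left hgp)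
  -- cardinality bound via the row space
  have hcard : S.ncard = Fintype.card S := by
    rw [Set.ncard_eq_toFinset_card', Set.toFinset_card]
  have h1 : Module.finrank F (Submodule.span F (Set.range (fun p : S => M p.1.1)))
      = Fintype.card S := finrank_span_eq_card hli
  have h2 : Submodule.span F (Set.range (fun p : S => M p.1.1))
      ≤ Submodule.span F (Set.range M) := by
    apply Submodule.span_mono
    rintro _ ⟨p, rfl⟩
    exact ⟨p.1.1, rfl⟩
  have h3 : Fintype.card S ≤ M.rank := by
    rw [M.rank_eq_finrank_span_row, ← h1]
    exact Submodule.finrank_mono h2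
  omega
end

section
/- Let M be an n×m matrix of rank ≤ r over a field, in (<k)-upper-echelon form, with 0 ≤ k ≤ n+m−2. Let s be the number of leading nonzero entries of M in the (<k)-diagonals, I the set of their rows, and J the set of their columns. Then the k-diagonal of M (entries (i,j) with i+j = k) has at most r − s nonzero entries in columns outside (k − I) ∪ J; in particular, the k-diagonal is (r+s)-sparse and hence 2r-sparse. -/
/-- A set of leading-nonzero-entry positions with pairwise distinct columns has
cardinality at most the rank of the matrix, since the corresponding rows are
linearly independent. -/
lemma lne_ncard_le_rank {F : Type*} [Field F] {n m : ℕ} (M : Matrix (Fin n) (Fin m) F)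
    (P : Set (Fin n × Fin m)) (hP : ∀ p ∈ P, M.IsLNE p.1 p.2)
    (hinj : ∀ p ∈ P, ∀ q ∈ P, p.2 = q.2 → p = q) : P.ncard ≤ M.rank := by
  classical
  have : Fintype P := Fintype.ofFinite P
  set v : P → (Fin m → F) := fun p => M p.1.1 with hv
  have hindep : LinearIndependent F v := by
    rw [Fintype.linearIndependent_iff]
    intro g hg
    by_contra hcon
    push_neg at hcon
    obtain ⟨p, hp⟩ := hcon
    obtain ⟨p₀, hp₀s, hmin⟩ := (Finset.univ.filter (fun q : P => g q ≠ 0)).exists_min_image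
        (fun q => ((q : Fin n × Fin m).2 : ℕ)) ⟨p, by simp [hp]⟩
    have hp₀ : g p₀ ≠ 0 := (Finset.mem_filter.mp hp₀s).2
    have hsum := congrFun hg (p₀ : Fin n × Fin m).2
    simp only [Finset.sum_apply, Pi.smul_apply, smul_eq_mul, Pi.zero_apply, hv] at hsum
    rw [Finset.sum_eq_single p₀] at hsum
    · exact mul_ne_zero hp₀ (hP p₀ p₀.2).1 hsum
    · intro q _ hqne
      by_cases hgq : g q = 0
      · simp [hgq]
      · have hqs : q ∈ Finset.univ.filter (fun q : P => g q ≠ 0) := by simp [hgq]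
        have hle := hmin q hqs
        have hne : ((p₀ : Fin n × Fin m).2 : ℕ) ≠ ((q : Fin n × Fin m).2 : ℕ) := by
          intro heq
          exact hqne (Subtype.ext (hinj q q.2 p₀ p₀.2 (Fin.ext heq.symm)))
        have hlt : (p₀ : Fin n × Fin m).2 < (q : Fin n × Fin m).2 := by
          rw [Fin.lt_def]; omega
        rw [(hP q q.2).2 _ hlt, mul_zero]
    · intro h; exact absurd (Finset.mem_univ p₀) h
  have h1 : P.ncard = Fintype.card P := by
    rw [← Nat.card_coe_set_eq, Nat.card_eq_fintype_card]
  have h2 := finrank_span_eq_card hindep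
  rw [Matrix.rank_eq_finrank_span_row, h1, ← h2]
  apply Submodule.finrank_mono
  apply Submodule.span_mono
  rintro _ ⟨p, rfl⟩
  exact ⟨p.1.1, rfl⟩

/-- The k-diagonal of a rank ≤ r matrix in (<k)-upper-echelon form has at most
`r - s` nonzero entries in columns outside `(k - I) ∪ J`, and is `(r+s)`-sparse,
hence `2r`-sparse. -/
theorem upperEchelon_diag_sparse {F : Type*} [Field F] {n m r k : ℕ}
    (M : Matrix (Fin n) (Fin m) F) (hrank : M.rank ≤ r)
    (hk : k ≤ n + m - 2) (hech : M.UpperEchelonLt k)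
    (L : Set (Fin n × Fin m))
    (hL : L = {p : Fin n × Fin m | M.IsLNE p.1 p.2 ∧ (p.1 : ℕ) + (p.2 : ℕ) < k})
    (S : Set (Fin m))
    (hS : S = {j : Fin m | (∃ p ∈ L, (p.1 : ℕ) + (j : ℕ) = k) ∨ ∃ p ∈ L, p.2 = j}) :
    {p : Fin n × Fin m |
        (p.1 : ℕ) + (p.2 : ℕ) = k ∧ M p.1 p.2 ≠ 0 ∧ p.2 ∉ S}.ncard ≤ r - L.ncard ∧
    {p : Fin n × Fin m | (p.1 : ℕ) + (p.2 : ℕ) = k ∧ M p.1 p.2 ≠ 0}.ncard ≤ r + L.ncard ∧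
    {p : Fin n × Fin m | (p.1 : ℕ) + (p.2 : ℕ) = k ∧ M p.1 p.2 ≠ 0}.ncard ≤ 2 * r := by
  classical
  set T := {p : Fin n × Fin m |
      (p.1 : ℕ) + (p.2 : ℕ) = k ∧ M p.1 p.2 ≠ 0 ∧ p.2 ∉ S} with hT
  set D := {p : Fin n × Fin m | (p.1 : ℕ) + (p.2 : ℕ) = k ∧ M p.1 p.2 ≠ 0} with hD
  have hLmem : ∀ p : Fin n × Fin m,
      p ∈ L ↔ (M.IsLNE p.1 p.2 ∧ (p.1 : ℕ) + (p.2 : ℕ) < k) := fun p => by rw [hL]; rfl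
  have hSmem : ∀ j : Fin m,
      j ∈ S ↔ ((∃ p ∈ L, (p.1 : ℕ) + (j : ℕ) = k) ∨ ∃ p ∈ L, p.2 = j) :=
    fun j => by rw [hS]; rfl
  have hLne : ∀ p ∈ L, M.IsLNE p.1 p.2 := fun p hp => ((hLmem p).1 hp).1
  -- distinct elements of L have distinct columns
  have hLcolinj : ∀ p ∈ L, ∀ q ∈ L, p.2 = q.2 → p = q := by
    intro p hp q hq hpq
    obtain ⟨hpl, hpk⟩ := (hLmem p).1 hp
    obtain ⟨hql, hqk⟩ := (hLmem q).1 hq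
    have hv : (p.2 : ℕ) = (q.2 : ℕ) := by rw [hpq]
    rcases lt_trichotomy (p.1 : ℕ) (q.1 : ℕ) with h | h | h
    · exact absurd (by rw [← hpq]; exact hech p.1 p.2 hpl hpk q.1 h (by omega)) hql.1
    · exact Prod.ext (Fin.ext h) hpq
    · exact absurd (by rw [hpq]; exact hech q.1 q.2 hql hqk p.1 h (by omega)) hpl.1
  -- every element of T is a leading nonzero entry
  have hTlne : ∀ p ∈ T, M.IsLNE p.1 p.2 := by
    intro p hp
    obtain ⟨hdiag, hne, hnotS⟩ := hp
    refine ⟨hne, ?_⟩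
    by_contra hcon
    push_neg at hcon
    obtain ⟨j', hj', hne'⟩ := hcon
    set s : Finset (Fin m) := Finset.univ.filter (fun j => M p.1 j ≠ 0) with hs
    have hj's : j' ∈ s := by simp [hs, hne']
    set j₀ := s.min' ⟨j', hj's⟩ with hj₀
    have hj₀ne : M p.1 j₀ ≠ 0 := (Finset.mem_filter.mp (s.min'_mem ⟨j', hj's⟩)).2
    have hj₀lne : M.IsLNE p.1 j₀ := by
      refine ⟨hj₀ne, fun j hlt => ?_⟩
      by_contra h
      exact absurd (s.min'_le j (by simp [hs, h])) (not_le.mpr hlt)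
    have hj₀le : j₀ ≤ j' := s.min'_le j' hj's
    have hk' : (p.1 : ℕ) + (j₀ : ℕ) < k := by
      have h1 : (j₀ : ℕ) ≤ (j' : ℕ) := hj₀le
      have h2 : (j' : ℕ) < (p.2 : ℕ) := hj'
      omega
    exact hnotS ((hSmem p.2).2 (Or.inl ⟨(p.1, j₀), (hLmem _).2 ⟨hj₀lne, hk'⟩, hdiag⟩))
  -- L and T are disjoint, and columns are injective on L ∪ T
  have hLT_ne : ∀ p ∈ T, p ∉ L := by
    intro p hp hpL
    exact hp.2.2 ((hSmem p.2).2 (Or.inr ⟨p, hpL, rfl⟩))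
  have hUne : ∀ p ∈ L ∪ T, M.IsLNE p.1 p.2 := by
    rintro p (hp | hp)
    · exact hLne p hp
    · exact hTlne p hp
  have hUcolinj : ∀ p ∈ L ∪ T, ∀ q ∈ L ∪ T, p.2 = q.2 → p = q := by
    rintro p (hp | hp) q (hq | hq) hpq
    · exact hLcolinj p hp q hq hpq
    · exact absurd ((hSmem q.2).2 (Or.inr ⟨p, hp, hpq⟩)) hq.2.2
    · exact absurd ((hSmem p.2).2 (Or.inr ⟨q, hq, hpq.symm⟩)) hp.2.2
    · have hv : (p.2 : ℕ) = (q.2 : ℕ) := by rw [hpq]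
      have h1 := hp.1
      have h2 := hq.1
      exact Prod.ext (Fin.ext (by omega)) hpq
  have hLTcard := lne_ncard_le_rank M (L ∪ T) hUne hUcolinj
  have hLcard := lne_ncard_le_rank M L hLne hLcolinj
  have hunion : (L ∪ T).ncard = L.ncard + T.ncard :=
    Set.ncard_union_eq (Set.disjoint_left.mpr (fun p hpL hpT => hLT_ne p hpT hpL))
      (Set.toFinite _) (Set.toFinite _)
  have hsum : L.ncard + T.ncard ≤ r := by
    rw [← hunion]; exact hLTcard.trans hrank
  have hLr : L.ncard ≤ r := hLcard.trans hrank
  -- bound the diagonal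
  have hDsub : D ⊆ T ∪ {p ∈ D | p.2 ∈ S} := by
    intro p hp
    by_cases h : p.2 ∈ S
    · exact Or.inr ⟨hp, h⟩
    · exact Or.inl ⟨hp.1, hp.2, h⟩
  have hDS : {p ∈ D | p.2 ∈ S}.ncard ≤ S.ncard := by
    refine Set.ncard_le_ncard_of_injOn (fun p => p.2) (fun p hp => hp.2) ?_ (Set.toFinite S)
    intro p hp q hq hpq
    have hpq' : p.2 = q.2 := hpq
    have hv : (p.2 : ℕ) = (q.2 : ℕ) := by rw [hpq']
    have h1 := hp.1.1
    have h2 := hq.1.1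
    exact Prod.ext (Fin.ext (by omega)) hpq'
  have hSbound : S.ncard ≤ 2 * L.ncard := by
    have hSeq : S = {j : Fin m | ∃ p ∈ L, (p.1 : ℕ) + (j : ℕ) = k} ∪
        {j : Fin m | ∃ p ∈ L, p.2 = j} := by
      rw [hS]; rfl
    have hA : {j : Fin m | ∃ p ∈ L, (p.1 : ℕ) + (j : ℕ) = k}.ncard ≤ L.ncard := by
      have e1 : ((fun j : Fin m => (j : ℕ)) ''
          {j : Fin m | ∃ p ∈ L, (p.1 : ℕ) + (j : ℕ) = k}).ncard =
          {j : Fin m | ∃ p ∈ L, (p.1 : ℕ) + (j : ℕ) = k}.ncard :=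
        Set.ncard_image_of_injOn (Fin.val_injective.injOn)
      have e2 : ((fun j : Fin m => (j : ℕ)) ''
          {j : Fin m | ∃ p ∈ L, (p.1 : ℕ) + (j : ℕ) = k}) ⊆
          (fun p : Fin n × Fin m => k - (p.1 : ℕ)) '' L := by
        rintro _ ⟨j, ⟨p, hpL, hpk⟩, rfl⟩
        exact ⟨p, hpL, by dsimp only; omega⟩
      calc {j : Fin m | ∃ p ∈ L, (p.1 : ℕ) + (j : ℕ) = k}.ncard
          = _ := e1.symm
        _ ≤ ((fun p : Fin n × Fin m => k - (p.1 : ℕ)) '' L).ncard :=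
            Set.ncard_le_ncard e2 (Set.toFinite _)
        _ ≤ L.ncard := Set.ncard_image_le (Set.toFinite _)
    have hB : {j : Fin m | ∃ p ∈ L, p.2 = j}.ncard ≤ L.ncard := by
      have : {j : Fin m | ∃ p ∈ L, p.2 = j} = Prod.snd '' L := by
        ext j; simp [Set.mem_image]
      rw [this]
      exact Set.ncard_image_le (Set.toFinite _)
    calc S.ncard ≤ _ + _ := hSeq ▸ Set.ncard_union_le _ _
      _ ≤ 2 * L.ncard := by omega
  have hDbound : D.ncard ≤ T.ncard + 2 * L.ncard := by
    calc D.ncard ≤ (T ∪ {p ∈ D | p.2 ∈ S}).ncard :=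
          Set.ncard_le_ncard hDsub (Set.toFinite _)
      _ ≤ T.ncard + {p ∈ D | p.2 ∈ S}.ncard := Set.ncard_union_le _ _
      _ ≤ T.ncard + 2 * L.ncard := by omega
  refine ⟨by omega, by omega, by omega⟩
end
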